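/- arXiv:1709.01018 — 5 statements merged into one kernel-verified Lean document; each statement's English description precedes it below -/
import Mathlib

section
/- Let u : [0,T] → ℝ^d be a Carathéodory solution of u̇(t) = f(t,u(t)), u(0) = u₀, where f satisfies Assumption A. Then u is Hölder continuous with exponent 1/2; more precisely, for all s,t ∈ [0,T] one has |u(s) − u(t)| ≤ (1 + sup_{z ∈ [0,T]} |u(z)|) · ‖L_{K_u} + g‖_{L²(0,T)} · |s − t|^{1/2}, where K_u is the closed ball in ℝ^d centered at the origin of radius e^{νT}( |u₀| + ∫₀ᵀ g(s) ds ). -/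
open MeasureTheory RealInnerProductSpace Set Filter

/-!
The weight `e^{-νt}` absorbs the one-sided Lipschitz constant: along the solution,
`⟪u, u'⟫ ≤ ν‖u‖² + g‖u‖` a.e., so `w(t) = e^{-νt}‖u(t)‖` is absolutely continuous with
`w' ≤ g` a.e., and the fundamental theorem of calculus for absolutely continuous functions gives
`‖u(t)‖ ≤ e^{νt}(‖u₀‖ + ∫₀ᵗ g)`. Thus `u` stays in the ball `K_u`, where the Lipschitz bound
yields `‖f(r, u(r))‖ ≤ (1 + sup ‖u‖)(L(r) + g(r))`, and Cauchy–Schwarz applied to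
`u(s) - u(t) = ∫ₜˢ f(r, u(r)) dr` gives the Hölder estimate.
-/

namespace AbsolutelyContinuousOnInterval

theorem of_dist_le_mul {X Y : Type*} [PseudoMetricSpace X] [PseudoMetricSpace Y]
    {f : ℝ → X} {g : ℝ → Y} {a b K : ℝ} (hg : AbsolutelyContinuousOnInterval g a b)
    (h : ∀ x ∈ uIcc a b, ∀ y ∈ uIcc a b, dist (f x) (f y) ≤ K * dist (g x) (g y)) :
    AbsolutelyContinuousOnInterval f a b := by
  unfold AbsolutelyContinuousOnInterval at hg ⊢
  refine squeeze_zero' (Eventually.of_forall fun _ ↦ Finset.sum_nonneg fun _ _ ↦ dist_nonneg)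
    ?_ (by simpa using hg.const_mul K)
  rw [eventually_inf_principal]
  filter_upwards with E hE
  rw [Finset.mul_sum]
  exact Finset.sum_le_sum fun i hi ↦ h _ (hE.1 i hi).1 _ (hE.1 i hi).2

theorem sub_le_integral_of_hasDerivAt_le {φ φ' ψ : ℝ → ℝ}
    {a b : ℝ} (hab : a ≤ b) (hφ : AbsolutelyContinuousOnInterval φ a b)
    (hψ : IntervalIntegrable ψ volume a b)
    (h : ∀ᵐ x, x ∈ Ioo a b → HasDerivAt φ (φ' x) x ∧ φ' x ≤ ψ x) :
    φ b - φ a ≤ ∫ x in a..b, ψ x := by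
  rw [← hφ.integral_deriv_eq_sub]
  refine intervalIntegral.integral_mono_ae_restrict hab hφ.intervalIntegrable_deriv hψ ?_
  rw [EventuallyLE, Measure.restrict_congr_set Ioo_ae_eq_Icc.symm,
    ae_restrict_iff' measurableSet_Ioo]
  filter_upwards [h] with x hx hxI
  obtain ⟨hd, hle⟩ := hx hxI
  rw [hd.deriv]
  exact hle

end AbsolutelyContinuousOnInterval

theorem norm_apply_le_one_add_mul_add {F G : Type*} [SeminormedAddCommGroup F]
    [SeminormedAddCommGroup G] {φ : F → G} {x : F} {L γ M : ℝ} (hL : 0 ≤ L)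
    (hlip : ‖φ x - φ 0‖ ≤ L * ‖x‖) (hγ : ‖φ 0‖ ≤ γ) (hx : ‖x‖ ≤ M) :
    ‖φ x‖ ≤ (1 + M) * (L + γ) := by
  have hφx : ‖φ x‖ ≤ ‖φ 0‖ + ‖φ x - φ 0‖ := norm_le_norm_add_norm_sub' (φ x) (φ 0)
  nlinarith [norm_nonneg x, norm_nonneg (φ 0), mul_le_mul_of_nonneg_left hx hL]

theorem lipschitzWith_sqrt_sq_add_norm_sq {F : Type*} [SeminormedAddCommGroup F] (δ : ℝ) :
    LipschitzWith 1 fun z : F ↦ √(δ ^ 2 + ‖z‖ ^ 2) := by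
  refine LipschitzWith.of_le_add fun x y ↦ ?_
  have hy := Real.sq_sqrt (add_nonneg (sq_nonneg δ) (sq_nonneg ‖y‖))
  have hy_le : ‖y‖ ≤ √(δ ^ 2 + ‖y‖ ^ 2) := Real.le_sqrt_of_sq_le (by nlinarith)
  have hxy : ‖x‖ ≤ ‖y‖ + dist x y := by
    rw [dist_eq_norm]; exact norm_le_norm_add_norm_sub' x y
  refine Real.sqrt_le_iff.2 ⟨by positivity, ?_⟩
  nlinarith [norm_nonneg x, dist_nonneg (x := x) (y := y)]

theorem intervalIntegral.integral_le_sqrt_integral_sq_mul_sqrt {h : ℝ → ℝ} {a b : ℝ}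
    (hab : a ≤ b) (hh : MemLp h 2 (volume.restrict (Ioc a b)))
    (hh0 : 0 ≤ᵐ[volume.restrict (Ioc a b)] h) :
    ∫ x in a..b, h x ≤ √(∫ x in a..b, h x ^ 2) * √(b - a) := by
  have hpq : Real.HolderConjugate 2 2 := Real.holderConjugate_iff.2 ⟨one_lt_two, by norm_num⟩
  have := integral_mul_le_Lp_mul_Lq_of_nonneg hpq hh0 (ae_of_all _ fun _ ↦ zero_le_one)
    (by simpa using hh) (memLp_const (1 : ℝ))
  simpa [intervalIntegral.integral_of_le hab, Real.sqrt_eq_rpow, hab] using this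

section NormedSpace

variable {E : Type*} [NormedAddCommGroup E] [NormedSpace ℝ E]

theorem IntervalIntegrable.absolutelyContinuousOnInterval_of_eq_add_integral {F u : ℝ → E}
    {a b : ℝ} {c : E} (hF : IntervalIntegrable F volume a b)
    (hu : ∀ x ∈ uIcc a b, u x = c + ∫ s in a..x, F s) :
    AbsolutelyContinuousOnInterval u a b := by
  refine (hF.norm.absolutelyContinuousOnInterval_intervalIntegral (c := a) (by simp)).of_dist_le_mul
    (K := 1) fun x hx y hy ↦ ?_
  rw [hu x hx, hu y hy, one_mul, dist_add_left, dist_comm, dist_eq_norm, dist_eq_norm,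
    Real.norm_eq_abs, intervalIntegral.integral_interval_sub_left
      (hF.mono_set (uIcc_subset_uIcc_left hy)) (hF.mono_set (uIcc_subset_uIcc_left hx)),
    abs_sub_comm, intervalIntegral.integral_interval_sub_left
      (hF.norm.mono_set (uIcc_subset_uIcc_left hy)) (hF.norm.mono_set (uIcc_subset_uIcc_left hx))]
  exact intervalIntegral.norm_integral_le_abs_integral_norm

theorem norm_integral_le_sqrt_integral_sq_mul_sqrt {F : ℝ → E} {h : ℝ → ℝ} {a b s t : ℝ}
    (hs : s ∈ Icc a b) (ht : t ∈ Icc a b) (hh : MemLp h 2 (volume.restrict (Icc a b)))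
    (hF : ∀ᵐ r, r ∈ Icc a b → ‖F r‖ ≤ h r) :
    ‖∫ r in s..t, F r‖ ≤ √(∫ r in Icc a b, h r ^ 2) * √|t - s| := by
  wlog hst : s ≤ t generalizing s t
  · rw [intervalIntegral.integral_symm, norm_neg, abs_sub_comm]
    exact this ht hs (le_of_not_ge hst)
  have hsub : Ioc s t ⊆ Icc a b := fun r hr ↦ ⟨hs.1.trans hr.1.le, hr.2.trans ht.2⟩
  have hh_st : MemLp h 2 (volume.restrict (Ioc s t)) :=
    hh.mono_measure (Measure.restrict_mono hsub le_rfl)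
  have hF_st : ∀ᵐ r, r ∈ Ioc s t → ‖F r‖ ≤ h r := by
    filter_upwards [hF] with r hr hrI using hr (hsub hrI)
  calc ‖∫ r in s..t, F r‖
      ≤ ∫ r in s..t, h r :=
        intervalIntegral.norm_integral_le_of_norm_le hst hF_st
          ((intervalIntegrable_iff_integrableOn_Ioc_of_le hst).2 (hh_st.integrable one_le_two))
    _ ≤ √(∫ r in s..t, h r ^ 2) * √(t - s) :=
        intervalIntegral.integral_le_sqrt_integral_sq_mul_sqrt hst hh_st <| by
          rw [EventuallyLE, ae_restrict_iff' measurableSet_Ioc]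
          filter_upwards [hF_st] with r hr hrI using (norm_nonneg _).trans (hr hrI)
    _ ≤ √(∫ r in Icc a b, h r ^ 2) * √|t - s| := by
        rw [abs_of_nonneg (sub_nonneg.2 hst), intervalIntegral.integral_of_le hst]
        refine mul_le_mul_of_nonneg_right (Real.sqrt_le_sqrt ?_) (Real.sqrt_nonneg _)
        exact setIntegral_mono_set hh.integrable_sq (ae_of_all _ fun _ ↦ sq_nonneg _)
          hsub.eventuallyLE

theorem norm_sub_le_mul_sqrt_of_eq_add_integral {F u : ℝ → E} {h : ℝ → ℝ} {c : E}
    {C a b s t : ℝ} (hF : IntegrableOn F (Icc a b))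
    (hu : ∀ x ∈ Icc a b, u x = c + ∫ r in a..x, F r) (hh : MemLp h 2 (volume.restrict (Icc a b)))
    (hC : 0 ≤ C) (hFh : ∀ᵐ r, r ∈ Icc a b → ‖F r‖ ≤ C * h r) (hs : s ∈ Icc a b)
    (ht : t ∈ Icc a b) :
    ‖u s - u t‖ ≤ C * √(∫ r in Icc a b, h r ^ 2) * √|s - t| := by
  have hab : a ≤ b := hs.1.trans hs.2
  have hF' : IntervalIntegrable F volume a b :=
    (intervalIntegrable_iff_integrableOn_Icc_of_le hab).2 hF
  have hHolder := norm_integral_le_sqrt_integral_sq_mul_sqrt (h := fun r ↦ C * h r)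
    ht hs (hh.const_mul C) hFh
  rw [integral_congr_ae (ae_of_all _ fun r ↦ mul_pow C (h r) 2), integral_const_mul,
    Real.sqrt_mul (sq_nonneg _), Real.sqrt_sq hC] at hHolder
  rw [hu s hs, hu t ht, add_sub_add_left_eq_sub, intervalIntegral.integral_interval_sub_left
    (hF'.mono_set (uIcc_subset_uIcc_left (by rwa [uIcc_of_le hab])))
    (hF'.mono_set (uIcc_subset_uIcc_left (by rwa [uIcc_of_le hab])))]
  simpa [mul_assoc] using hHolder

variable [CompleteSpace E]

theorem ae_hasDerivAt_of_eq_add_integral {F u : ℝ → E} {a b : ℝ} {c : E}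
    (hF : IntervalIntegrable F volume a b) (hu : ∀ x ∈ Icc a b, u x = c + ∫ s in a..x, F s) :
    ∀ᵐ x, x ∈ Ioo a b → HasDerivAt u (F x) x := by
  filter_upwards [hF.ae_hasDerivAt_integral] with x hx hxI
  have hxI' : x ∈ uIcc a b := uIcc_of_le (hxI.1.le.trans hxI.2.le) ▸ Ioo_subset_Icc_self hxI
  refine ((hx hxI' a left_mem_uIcc).const_add c).congr_of_eventuallyEq ?_
  filter_upwards [Icc_mem_nhds hxI.1 hxI.2] with y hy using hu y hy

end NormedSpace

section InnerProductSpace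

variable {E : Type*} [NormedAddCommGroup E] [InnerProductSpace ℝ E]

theorem norm_le_norm_add_integral_of_inner_le {v v' : ℝ → E} {h : ℝ → ℝ} {a b : ℝ}
    (hab : a ≤ b) (hv : AbsolutelyContinuousOnInterval v a b)
    (hh : IntervalIntegrable h volume a b)
    (hderiv : ∀ᵐ x, x ∈ Ioo a b →
      HasDerivAt v (v' x) x ∧ ⟪v x, v' x⟫ ≤ h x * ‖v x‖ ∧ 0 ≤ h x) :
    ‖v b‖ ≤ ‖v a‖ + ∫ x in a..b, h x := by
  refine le_of_forall_pos_le_add fun δ hδ ↦ ?_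
  -- unlike `‖v‖`, this is differentiable wherever `v` is
  set w : ℝ → ℝ := fun x ↦ √(δ ^ 2 + ‖v x‖ ^ 2)
  have hw_pos (x : ℝ) : 0 < w x := Real.sqrt_pos.2 (by positivity)
  have hw_norm (x : ℝ) : ‖v x‖ ≤ w x := Real.le_sqrt_of_sq_le (by nlinarith)
  have hw : AbsolutelyContinuousOnInterval w a b :=
    hv.of_dist_le_mul (K := 1) fun x _ y _ ↦ by
      simpa [w] using (lipschitzWith_sqrt_sq_add_norm_sq δ).dist_le_mul (v x) (v y)
  have hwa : w a ≤ ‖v a‖ + δ :=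
    Real.sqrt_le_iff.2 ⟨by positivity, by nlinarith [norm_nonneg (v a)]⟩
  have hw_growth := hw.sub_le_integral_of_hasDerivAt_le hab hh
    (φ' := fun x ↦ ⟪v x, v' x⟫ / w x) <| by
    filter_upwards [hderiv] with x hx hxI
    obtain ⟨hd, hinner, hh0⟩ := hx hxI
    refine ⟨?_, ?_⟩
    · convert (hd.norm_sq.const_add (δ ^ 2)).sqrt (by positivity) using 1
      simp only [w]
      field_simp
    · rw [div_le_iff₀ (hw_pos x)]
      nlinarith [mul_le_mul_of_nonneg_left (hw_norm x) hh0]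
  linarith [hw_norm b]

theorem norm_le_exp_mul_add_integral_of_inner_le {u u' : ℝ → E} {g : ℝ → ℝ} {ν a b : ℝ}
    (hν : 0 ≤ ν) (hab : a ≤ b) (hu : AbsolutelyContinuousOnInterval u a b)
    (hg : IntervalIntegrable g volume a b)
    (hderiv : ∀ᵐ x, x ∈ Ioo a b → HasDerivAt u (u' x) x ∧
      ⟪u x, u' x⟫ ≤ ν * ‖u x‖ ^ 2 + g x * ‖u x‖ ∧ 0 ≤ g x) :
    ‖u b‖ ≤ Real.exp (ν * (b - a)) * (‖u a‖ + ∫ x in a..b, g x) := by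
  set c : ℝ → ℝ := fun x ↦ Real.exp (-ν * (x - a)) with hc_def
  have hc : AbsolutelyContinuousOnInterval c a b :=
    ContDiffOn.absolutelyContinuousOnInterval (by fun_prop)
  have hc_pos (x : ℝ) : 0 < c x := Real.exp_pos _
  have hc_le_one {x : ℝ} (hx : a ≤ x) : c x ≤ 1 :=
    Real.exp_le_one_iff.2 (by nlinarith)
  have hweighted := norm_le_norm_add_integral_of_inner_le hab (hc.fun_smul hu) hg
    (v' := fun x ↦ c x • u' x + (c x * -ν) • u x) <| by
    filter_upwards [hderiv] with x hx hxI
    obtain ⟨hd, hinner, hg0⟩ := hx hxI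
    have hlin : HasDerivAt (fun y ↦ -ν * (y - a)) (-ν) x := by
      simpa using ((hasDerivAt_id x).sub_const a).const_mul (-ν)
    have hcx : HasDerivAt c (c x * -ν) x := hlin.exp
    refine ⟨hcx.smul hd, ?_, hg0⟩
    simp only [inner_add_right, real_inner_smul_left, real_inner_smul_right,
      real_inner_self_eq_norm_sq, norm_smul, Real.norm_of_nonneg (hc_pos x).le]
    nlinarith [mul_le_mul_of_nonneg_left hinner (mul_nonneg (hc_pos x).le (hc_pos x).le),
      mul_nonneg (mul_nonneg (hc_pos x).le (sub_nonneg.2 (hc_le_one hxI.1.le)))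
        (mul_nonneg hg0 (norm_nonneg (u x)))]
  have hca : c a = 1 := by simp [hc_def]
  have hcb : Real.exp (ν * (b - a)) * c b = 1 := by
    rw [hc_def, ← Real.exp_add]; simp
  simp only [norm_smul, Real.norm_of_nonneg (hc_pos _).le, hca, norm_one,
    one_mul] at hweighted
  calc ‖u b‖ = Real.exp (ν * (b - a)) * (c b * ‖u b‖) := by rw [← mul_assoc, hcb, one_mul]
    _ ≤ _ := mul_le_mul_of_nonneg_left hweighted (Real.exp_pos _).le

variable [CompleteSpace E]

theorem norm_le_exp_mul_of_inner_sub_le {f : ℝ → E → E} {u : ℝ → E} {u₀ : E} {g : ℝ → ℝ}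
    {ν T : ℝ} (hν : 0 ≤ ν) (hg : IntegrableOn g (Icc 0 T))
    (hf_onesided : ∀ᵐ t, t ∈ Icc 0 T → ∀ x y, ⟪f t x - f t y, x - y⟫ ≤ ν * ‖x - y‖ ^ 2)
    (hf_bound : ∀ᵐ t, t ∈ Icc 0 T → ‖f t 0‖ ≤ g t)
    (hu_int : IntegrableOn (fun s ↦ f s (u s)) (Icc 0 T))
    (hu_sol : ∀ t ∈ Icc 0 T, u t = u₀ + ∫ s in (0 : ℝ)..t, f s (u s)) :
    ∀ t ∈ Icc 0 T, ‖u t‖ ≤ Real.exp (ν * t) * (‖u₀‖ + ∫ s in (0 : ℝ)..t, g s) := by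
  intro t ht
  have hsub : Icc 0 t ⊆ Icc 0 T := Icc_subset_Icc_right ht.2
  have hF : IntervalIntegrable (fun s ↦ f s (u s)) volume 0 t :=
    (intervalIntegrable_iff_integrableOn_Icc_of_le ht.1).2 (hu_int.mono_set hsub)
  have hu_sol' : ∀ x ∈ Icc 0 t, u x = u₀ + ∫ s in (0 : ℝ)..x, f s (u s) :=
    fun x hx ↦ hu_sol x (hsub hx)
  have hu₀ : u 0 = u₀ := by simpa using hu_sol 0 ⟨le_rfl, ht.1.trans ht.2⟩
  have hgrowth := norm_le_exp_mul_add_integral_of_inner_le hν ht.1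
    (hF.absolutelyContinuousOnInterval_of_eq_add_integral (by rwa [uIcc_of_le ht.1]))
    ((intervalIntegrable_iff_integrableOn_Icc_of_le ht.1).2 (hg.mono_set hsub)) <| by
    filter_upwards [ae_hasDerivAt_of_eq_add_integral hF hu_sol', hf_onesided, hf_bound]
      with x hd hos hb hx
    have hxT : x ∈ Icc 0 T := hsub (Ioo_subset_Icc_self hx)
    have hos := hos hxT (u x) 0
    have hb := hb hxT
    refine ⟨hd hx, ?_, (norm_nonneg _).trans hb⟩
    rw [sub_zero] at hos
    calc ⟪u x, f x (u x)⟫ = ⟪f x (u x) - f x 0, u x⟫ + ⟪f x 0, u x⟫ := by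
          rw [inner_sub_left, sub_add_cancel, real_inner_comm]
      _ ≤ ν * ‖u x‖ ^ 2 + g x * ‖u x‖ := by
          gcongr
          exact (real_inner_le_norm _ _).trans (by gcongr)
  simpa [hu₀] using hgrowth

end InnerProductSpace

theorem stmt1_general
    (T : ℝ) (d : ℕ) (u₀ : EuclideanSpace ℝ (Fin d))
    (f : ℝ → EuclideanSpace ℝ (Fin d) → EuclideanSpace ℝ (Fin d))
    (Nf : Set ℝ) (hNf_null : volume Nf = 0)
    (ν : ℝ) (hν : 0 ≤ ν)
    (hf_onesided : ∀ t ∈ Set.Icc (0:ℝ) T \ Nf, ∀ x y : EuclideanSpace ℝ (Fin d),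
      ⟪f t x - f t y, x - y⟫ ≤ ν * ‖x - y‖ ^ 2)
    (g : ℝ → ℝ) (hg_nonneg : ∀ t, 0 ≤ g t)
    (hg_L2 : MemLp g 2 (volume.restrict (Set.Icc (0:ℝ) T)))
    (hf_bound : ∀ t ∈ Set.Icc (0:ℝ) T \ Nf, ‖f t 0‖ ≤ g t)
    -- a Lipschitz function `L = L_{K_u}` associated to the compact set `K_u`
    (L : ℝ → ℝ) (hL_nonneg : ∀ t, 0 ≤ L t)
    (hL_L2 : MemLp L 2 (volume.restrict (Set.Icc (0:ℝ) T)))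
    (hL_lip : ∀ t ∈ Set.Icc (0:ℝ) T \ Nf,
      ∀ x ∈ Metric.closedBall (0 : EuclideanSpace ℝ (Fin d))
          (Real.exp (ν * T) * (‖u₀‖ + ∫ s in (0:ℝ)..T, g s)),
      ∀ y ∈ Metric.closedBall (0 : EuclideanSpace ℝ (Fin d))
          (Real.exp (ν * T) * (‖u₀‖ + ∫ s in (0:ℝ)..T, g s)),
        ‖f t x - f t y‖ ≤ L t * ‖x - y‖)
    (u : ℝ → EuclideanSpace ℝ (Fin d))
    (hu_int : IntegrableOn (fun s => f s (u s)) (Set.Icc (0:ℝ) T))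
    (hu_sol : ∀ t ∈ Set.Icc (0:ℝ) T, u t = u₀ + ∫ s in (0:ℝ)..t, f s (u s)) :
    ∀ s ∈ Set.Icc (0:ℝ) T, ∀ t ∈ Set.Icc (0:ℝ) T,
      ‖u s - u t‖ ≤ (1 + sSup ((fun z => ‖u z‖) '' Set.Icc (0:ℝ) T)) *
        Real.sqrt (∫ r in Set.Icc (0:ℝ) T, (L r + g r) ^ 2) *
        Real.sqrt |s - t| := by
  intro s hs t ht
  have hT : 0 ≤ T := hs.1.trans hs.2
  have hgood : ∀ᵐ r, r ∉ Nf := measure_eq_zero_iff_ae_notMem.1 hNf_null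
  have hF : IntervalIntegrable (fun r ↦ f r (u r)) volume 0 T :=
    (intervalIntegrable_iff_integrableOn_Icc_of_le hT).2 hu_int
  have hR : ∀ z ∈ Icc 0 T, ‖u z‖ ≤ Real.exp (ν * T) * (‖u₀‖ + ∫ r in (0:ℝ)..T, g r) := by
    intro z hz
    refine (norm_le_exp_mul_of_inner_sub_le hν (hg_L2.integrable one_le_two) ?_ ?_ hu_int
      hu_sol z hz).trans ?_
    · filter_upwards [hgood] with r hr hrI using hf_onesided r ⟨hrI, hr⟩
    · filter_upwards [hgood] with r hr hrI using hf_bound r ⟨hrI, hr⟩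
    · have : 0 ≤ ∫ r in (0:ℝ)..z, g r :=
        intervalIntegral.integral_nonneg hz.1 fun r _ ↦ hg_nonneg r
      gcongr
      · exact hz.2
      · exact intervalIntegral.integral_mono_interval le_rfl hz.1 hz.2
          (ae_of_all _ fun r ↦ hg_nonneg r)
          ((intervalIntegrable_iff_integrableOn_Icc_of_le hT).2 (hg_L2.integrable one_le_two))
  set M := sSup ((fun z => ‖u z‖) '' Icc 0 T)
  have hu_cont : ContinuousOn u (Icc 0 T) := by
    simpa [uIcc_of_le hT] using
      (hF.absolutelyContinuousOnInterval_of_eq_add_integral (by rwa [uIcc_of_le hT])).continuousOn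
  have hM : 0 ≤ M := (norm_nonneg _).trans (hu_cont.norm.le_sSup_image_Icc hs)
  refine norm_sub_le_mul_sqrt_of_eq_add_integral hu_int hu_sol (hL_L2.add hg_L2) (by linarith) ?_
    hs ht
  filter_upwards [hgood] with r hr hrI
  refine norm_apply_le_one_add_mul_add (hL_nonneg r) ?_ (hf_bound r ⟨hrI, hr⟩)
    (hu_cont.norm.le_sSup_image_Icc hrI)
  simpa using hL_lip r ⟨hrI, hr⟩ (u r) (by simpa using hR r hrI) 0
    (Metric.mem_closedBall_self ((norm_nonneg _).trans (hR r hrI)))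

/-- Hölder continuity with exponent `1/2` of the Carathéodory
solution `u` of `u̇(t) = f(t,u(t))`, `u(0) = u₀`, under Assumption A:
`|u(s) − u(t)| ≤ (1 + sup_{z∈[0,T]} |u(z)|) ‖L_{K_u} + g‖_{L²(0,T)} |s−t|^{1/2}`,
where `K_u` is the closed ball of radius `e^{νT}(|u₀| + ∫₀ᵀ g)` around the origin. -/
theorem stmt1
    (T : ℝ) (hT : 0 < T) (d : ℕ) (u₀ : EuclideanSpace ℝ (Fin d))
    (f : ℝ → EuclideanSpace ℝ (Fin d) → EuclideanSpace ℝ (Fin d))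
    (hf_meas : Measurable (Function.uncurry f))
    (Nf : Set ℝ) (hNf_null : volume Nf = 0)
    (ν : ℝ) (hν : 0 ≤ ν)
    (hf_onesided : ∀ t ∈ Set.Icc (0:ℝ) T \ Nf, ∀ x y : EuclideanSpace ℝ (Fin d),
      ⟪f t x - f t y, x - y⟫ ≤ ν * ‖x - y‖ ^ 2)
    (g : ℝ → ℝ) (hg_meas : Measurable g) (hg_nonneg : ∀ t, 0 ≤ g t)
    (hg_L2 : MemLp g 2 (volume.restrict (Set.Icc (0:ℝ) T)))
    (hf_bound : ∀ t ∈ Set.Icc (0:ℝ) T \ Nf, ‖f t 0‖ ≤ g t)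
    -- Assumption A (iii): local Lipschitz condition on every compact set
    (hf_lip : ∀ K : Set (EuclideanSpace ℝ (Fin d)), IsCompact K →
      ∃ LK : ℝ → ℝ, Measurable LK ∧ (∀ t, 0 ≤ LK t) ∧
        MemLp LK 2 (volume.restrict (Set.Icc (0:ℝ) T)) ∧
        ∀ t ∈ Set.Icc (0:ℝ) T \ Nf, ∀ x ∈ K, ∀ y ∈ K,
          ‖f t x - f t y‖ ≤ LK t * ‖x - y‖)
    -- a Lipschitz function `L = L_{K_u}` associated to the compact set `K_u`
    (L : ℝ → ℝ) (hL_meas : Measurable L) (hL_nonneg : ∀ t, 0 ≤ L t)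
    (hL_L2 : MemLp L 2 (volume.restrict (Set.Icc (0:ℝ) T)))
    (hL_lip : ∀ t ∈ Set.Icc (0:ℝ) T \ Nf,
      ∀ x ∈ Metric.closedBall (0 : EuclideanSpace ℝ (Fin d))
          (Real.exp (ν * T) * (‖u₀‖ + ∫ s in (0:ℝ)..T, g s)),
      ∀ y ∈ Metric.closedBall (0 : EuclideanSpace ℝ (Fin d))
          (Real.exp (ν * T) * (‖u₀‖ + ∫ s in (0:ℝ)..T, g s)),
        ‖f t x - f t y‖ ≤ L t * ‖x - y‖)
    (u : ℝ → EuclideanSpace ℝ (Fin d))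
    (hu_int : IntegrableOn (fun s => f s (u s)) (Set.Icc (0:ℝ) T))
    (hu_sol : ∀ t ∈ Set.Icc (0:ℝ) T, u t = u₀ + ∫ s in (0:ℝ)..t, f s (u s)) :
    ∀ s ∈ Set.Icc (0:ℝ) T, ∀ t ∈ Set.Icc (0:ℝ) T,
      ‖u s - u t‖ ≤ (1 + sSup ((fun z => ‖u z‖) '' Set.Icc (0:ℝ) T)) *
        Real.sqrt (∫ r in Set.Icc (0:ℝ) T, (L r + g r) ^ 2) *
        Real.sqrt |s - t| :=
  stmt1_general T d u₀ f Nf hNf_null ν hν hf_onesided g hg_nonneg hg_L2 hf_bound L hL_nonneg hL_L2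
    hL_lip u hu_int hu_sol
end

section
/- Let (Ω, F, P) be a probability space, let F̃ ⊆ F be a sub-σ-algebra that is complete with respect to P (contains all P-null sets of F), let M ∈ F̃ with P(M) = 1, and let h : Ω × ℝ^d → ℝ^d satisfy: (i) for every ω ∈ M the map x ↦ h(ω,x) is continuous; (ii) for every x ∈ ℝ^d the map ω ↦ h(ω,x) is F̃-measurable; (iii) for every ω ∈ M there exists a unique x ∈ ℝ^d with h(ω,x) = 0. Let U : Ω → ℝ^d be any map such that U(ω) is the unique root of h(ω,·) for every ω ∈ M (and U is arbitrary on Ω ∖ M). Then U is F̃-measurable. -/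
/-!
On `M` the event `{U ∈ C}`, for `C` closed, is the event that `h(ω,·)` has a zero in `C`.
Cover `C` by the compact sets `C ∩ Kₖ` of a compact exhaustion and pick countable dense
subsets `Dₖ`: by continuity and compactness, `h(ω,·)` vanishes somewhere on `C ∩ Kₖ` iff
`inf_{x ∈ Dₖ} ‖h(ω,x)‖ = 0`, a countable combination of measurable events. Off `M` the
preimage is a subset of a null set, hence measurable by completeness.
-/

open MeasureTheory Set TopologicalSpace

section RootSelection

variable {X Y : Type*} [TopologicalSpace X] [NormedAddCommGroup Y]

theorem IsCompact.exists_eq_zero_iff_forall_exists_norm_lt {K D : Set X} (hK : IsCompact K)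
    (hDK : D ⊆ K) (hKD : K ⊆ closure D) {f : X → Y} (hf : Continuous f) :
    (∃ x ∈ K, f x = 0) ↔ ∀ n : ℕ, ∃ x ∈ D, ‖f x‖ < 1 / ((n : ℝ) + 1) := by
  constructor
  · rintro ⟨a, haK, ha⟩ n
    have hopen : IsOpen {x | ‖f x‖ < 1 / ((n : ℝ) + 1)} := isOpen_lt hf.norm continuous_const
    have ha_mem : a ∈ {x | ‖f x‖ < 1 / ((n : ℝ) + 1)} := by
      simp only [mem_ofPred_eq, ha, norm_zero]
      positivity
    obtain ⟨x, hx, hxD⟩ := mem_closure_iff.1 (hKD haK) _ hopen ha_mem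
    exact ⟨x, hxD, hx⟩
  · intro hsmall
    have hne : K.Nonempty := let ⟨x, hxD, _⟩ := hsmall 0; ⟨x, hDK hxD⟩
    obtain ⟨a, haK, hmin⟩ := hK.exists_isMinOn hne hf.norm.continuousOn
    refine ⟨a, haK, norm_le_zero_iff.1 (not_lt.1 fun hpos => ?_)⟩
    obtain ⟨n, hn⟩ := exists_nat_one_div_lt hpos
    obtain ⟨x, hxD, hx⟩ := hsmall n
    exact (isMinOn_iff.1 hmin x (hDK hxD)).not_gt (hx.trans hn)

variable {Ω : Type*} [MeasurableSpace Ω] [MeasurableSpace Y] [OpensMeasurableSpace Y]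
  [SigmaCompactSpace X] [PseudoMetrizableSpace X]

theorem exists_measurableSet_iff_exists_mem_eq_zero {h : Ω → X → Y}
    (hmeas : ∀ x, Measurable fun ω => h ω x) {C : Set X} (hC : IsClosed C) :
    ∃ T : Set Ω, MeasurableSet T ∧
      ∀ ω, Continuous (h ω) → (ω ∈ T ↔ ∃ x ∈ C, h ω x = 0) := by
  have hK : ∀ k, IsCompact (C ∩ compactCovering X k) :=
    fun k => (isCompact_compactCovering X k).inter_left hC
  choose D hDK hDcount hKD using fun k => (hK k).isSeparable.exists_countable_dense_subset
  refine ⟨⋃ k, ⋂ n : ℕ, ⋃ x ∈ D k, {ω | ‖h ω x‖ < 1 / ((n : ℝ) + 1)}, ?_, fun ω hω => ?_⟩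
  · exact .iUnion fun k => .iInter fun n => .biUnion (hDcount k) fun x _ =>
      measurableSet_lt (hmeas x).norm measurable_const
  · have hcover : (∃ x ∈ C, h ω x = 0) ↔ ∃ k, ∃ x ∈ C ∩ compactCovering X k, h ω x = 0 := by
      constructor
      · rintro ⟨x, hxC, hx⟩
        obtain ⟨k, hk⟩ := mem_iUnion.1 (iUnion_compactCovering X ▸ mem_univ x)
        exact ⟨k, x, ⟨hxC, hk⟩, hx⟩
      · rintro ⟨k, x, hx, hx0⟩
        exact ⟨x, hx.1, hx0⟩
    simp only [hcover, ((hK _).exists_eq_zero_iff_forall_exists_norm_lt (hDK _) (hKD _) hω),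
      mem_iUnion, mem_iInter, mem_ofPred_eq, exists_prop]

theorem measurableSet_inter_preimage_of_forall_eq_zero_iff {M : Set Ω} (hM : MeasurableSet M)
    {h : Ω → X → Y} (hcont : ∀ ω ∈ M, Continuous (h ω)) (hmeas : ∀ x, Measurable fun ω => h ω x)
    {U : Ω → X} (hU : ∀ ω ∈ M, ∀ x, h ω x = 0 ↔ x = U ω) {C : Set X} (hC : IsClosed C) :
    MeasurableSet (M ∩ U ⁻¹' C) := by
  obtain ⟨T, hT, hT_iff⟩ := exists_measurableSet_iff_exists_mem_eq_zero hmeas hC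
  convert hM.inter hT using 1
  ext ω
  simp only [mem_inter_iff, mem_preimage, and_congr_right_iff]
  intro hωM
  simp [hT_iff ω (hcont ω hωM), hU ω hωM]

end RootSelection

/-- Measurable selection of the unique root: if `h(ω,·)` is
continuous for `ω` in a set `M` of full measure, `h(·,x)` is `F̃`-measurable for
every `x`, where `F̃` is a sub-σ-algebra containing all `P`-null sets, and for
every `ω ∈ M` the map `h(ω,·)` has a unique root `U(ω)`, then `U` is
`F̃`-measurable. -/
theorem stmt4
    {Ω : Type*} (d : ℕ) {F : MeasurableSpace Ω} (P : Measure Ω) [IsProbabilityMeasure P]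
    (F' : MeasurableSpace Ω) (hF'le : F' ≤ F)
    (hF'complete : ∀ s : Set Ω, P s = 0 → MeasurableSet[F'] s)
    (M : Set Ω) (hM_meas : MeasurableSet[F'] M) (hM_full : P M = 1)
    (h : Ω → EuclideanSpace ℝ (Fin d) → EuclideanSpace ℝ (Fin d))
    (hcont : ∀ ω ∈ M, Continuous (h ω))
    (hmeas : ∀ x : EuclideanSpace ℝ (Fin d), Measurable[F'] (fun ω => h ω x))
    (hroot : ∀ ω ∈ M, ∃! x : EuclideanSpace ℝ (Fin d), h ω x = 0)
    (U : Ω → EuclideanSpace ℝ (Fin d))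
    (hU : ∀ ω ∈ M, h ω (U ω) = 0) :
    Measurable[F'] U := by
  have hMc_null : P Mᶜ = 0 := (prob_compl_eq_zero_iff (hF'le M hM_meas)).2 hM_full
  have hU_iff : ∀ ω ∈ M, ∀ x, h ω x = 0 ↔ x = U ω := fun ω hω x =>
    ⟨fun hx => (hroot ω hω).unique hx (hU ω hω), fun hx => hx ▸ hU ω hω⟩
  refine @measurable_of_isClosed _ _ _ _ _ F' _ fun C hC => ?_
  have h_on_M : MeasurableSet[F'] (U ⁻¹' C ∩ M) := inter_comm M _ ▸
    measurableSet_inter_preimage_of_forall_eq_zero_iff hM_meas hcont hmeas hU_iff hC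
  have h_off_M : MeasurableSet[F'] (U ⁻¹' C \ M) :=
    hF'complete _ (measure_mono_null (fun ω hω => hω.2) hMc_null)
  rw [← inter_union_sdiff (U ⁻¹' C) M]
  exact h_on_M.union h_off_M
end

section
/- Let f satisfy Assumption A and let u₀ ∈ ℝ^d. For every N ∈ ℕ with k·ν < 1, where k = T/N, there exists a unique grid function (U^n)_{n=0,…,N} in the class G²_N solving the randomized backward Euler scheme, i.e. U^0 = u₀ and, for every n ∈ {1,…,N}, U^n is F_n-measurable, U^n ∈ L²(Ω;ℝ^d), f(ξ_n, U^n) ∈ L²(Ω;ℝ^d), and U^n = U^{n−1} + k f(ξ_n, U^n) holds P-almost surely. -/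
/-!
At every time `t` outside a null set, the one-sided Lipschitz condition makes the implicit step
`F_t x = x - k f(t, x)` strongly monotone with constant `1 - kν > 0`. Being also Lipschitz on
balls, `F_t` is onto (Banach's fixed point theorem for `x ↦ x - λ (F_t x - b)` on a ball around
`b`) with a `(1 - kν)⁻¹`-Lipschitz inverse. The inverse is jointly measurable in `(t, b)`, as a
pointwise limit of selections from a dense sequence, so `U^n = F_{ξ_n}⁻¹ U^{n-1}` is adapted, and
`‖F_t⁻¹ b‖ ≤ (1 - kν)⁻¹ (‖b‖ + k g(t))` gives square integrability by induction because `ξ_n`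
has a bounded density on `[0, T]`. Any other solution satisfies `F_{ξ_n} U^n = U^{n-1}` almost
surely, hence agrees with this one.
-/

open MeasureTheory RealInnerProductSpace

/-- A grid function `U` solves the randomized backward Euler scheme for `f`
with initial value `u₀`, `N` steps of size `k`, random evaluation points `ξ n`,
and filtration `𝓕`: `U 0 ≡ u₀` and, for every `n ∈ {1,…,N}`, `U n` is
`𝓕 n`-measurable and square-integrable, `f(ξ n, U n)` is `𝓕 n`-measurable and
square-integrable, and `U n = U (n-1) + k f(ξ n, U n)` almost surely. -/
def RBESolution {d : ℕ} {Ω : Type} [MeasurableSpace Ω] (P : Measure Ω)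
    (N : ℕ) (k : ℝ) (𝓕 : ℕ → MeasurableSpace Ω) (ξ : ℕ → Ω → ℝ)
    (f : ℝ → EuclideanSpace ℝ (Fin d) → EuclideanSpace ℝ (Fin d))
    (u₀ : EuclideanSpace ℝ (Fin d)) (U : ℕ → Ω → EuclideanSpace ℝ (Fin d)) : Prop :=
  (∀ ω, U 0 ω = u₀) ∧
  ∀ n, 1 ≤ n → n ≤ N →
    Measurable[𝓕 n] (U n) ∧ MemLp (U n) 2 P ∧
    Measurable[𝓕 n] (fun ω => f (ξ n ω) (U n ω)) ∧
    MemLp (fun ω => f (ξ n ω) (U n ω)) 2 P ∧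
    (∀ᵐ ω ∂P, U n ω = U (n - 1) ω + k • f (ξ n ω) (U n ω))

open Function Metric Set Filter Topology
open scoped NNReal ENNReal

theorem continuous_of_lipschitzOnWith_closedBall {X Y : Type*} [PseudoMetricSpace X]
    [PseudoEMetricSpace Y] {F : X → Y}
    (hF : ∀ x (R : ℝ), ∃ L, LipschitzOnWith L F (closedBall x R)) : Continuous F :=
  continuous_iff_continuousAt.2 fun x =>
    let ⟨_, hL⟩ := hF x 1
    hL.continuousOn.continuousAt (closedBall_mem_nhds x one_pos)

section StronglyMonotone

variable {E : Type*} [NormedAddCommGroup E] [InnerProductSpace ℝ E] {F : E → E} {c : ℝ}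

theorem antilipschitzWith_of_strongMono (hc : 0 < c)
    (hF : ∀ x y, c * ‖x - y‖ ^ 2 ≤ ⟪F x - F y, x - y⟫) :
    AntilipschitzWith (Real.toNNReal c⁻¹) F := by
  refine AntilipschitzWith.of_le_mul_dist fun x y => ?_
  rw [dist_eq_norm, dist_eq_norm, Real.coe_toNNReal _ (inv_nonneg.2 hc.le),
    inv_mul_eq_div, le_div_iff₀ hc]
  have h := (hF x y).trans (real_inner_le_norm _ _)
  rcases (norm_nonneg (x - y)).eq_or_lt with h0 | hpos
  · rw [← h0, zero_mul]; exact norm_nonneg _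
  · nlinarith

-- `λ = c / (L² + c²)` makes `1 - 2λc + λ²L² = 1 - λc ≤ (1 - λc/2)²`.
theorem norm_sub_smul_sub_le {L : ℝ} (hc : 0 < c) {x y : E}
    (hmono : c * ‖x - y‖ ^ 2 ≤ ⟪F x - F y, x - y⟫) (hlip : ‖F x - F y‖ ≤ L * ‖x - y‖) :
    ‖(x - (c / (L ^ 2 + c ^ 2)) • F x) - (y - (c / (L ^ 2 + c ^ 2)) • F y)‖ ≤
      (1 - c / (L ^ 2 + c ^ 2) * c / 2) * ‖x - y‖ := by
  set lam := c / (L ^ 2 + c ^ 2)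
  have hlam : 0 < lam := by positivity
  have hlamc : lam * c ≤ 1 := by
    rw [div_mul_eq_mul_div, div_le_one (by positivity)]; nlinarith [sq_nonneg L]
  have hsq : ‖F x - F y‖ ^ 2 ≤ L ^ 2 * ‖x - y‖ ^ 2 := by
    rw [← mul_pow]; exact pow_le_pow_left₀ (norm_nonneg _) hlip 2
  have key : ‖(x - y) - lam • (F x - F y)‖ ^ 2 ≤ ((1 - lam * c / 2) * ‖x - y‖) ^ 2 := by
    rw [norm_sub_sq_real, real_inner_smul_right, norm_smul, Real.norm_of_nonneg hlam.le,
      real_inner_comm]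
    have hL : lam ^ 2 * L ^ 2 ≤ lam * c - lam ^ 2 * c ^ 2 := by
      have : lam * (L ^ 2 + c ^ 2) = c := div_mul_cancel₀ c (by positivity)
      nlinarith
    nlinarith [mul_le_mul_of_nonneg_left hmono hlam.le,
      mul_le_mul_of_nonneg_left hsq (sq_nonneg lam), sq_nonneg (lam * c * ‖x - y‖)]
  have : (x - lam • F x) - (y - lam • F y) = (x - y) - lam • (F x - F y) := by
    rw [smul_sub]; abel
  rw [this]
  exact le_of_sq_le_sq key (mul_nonneg (by linarith) (norm_nonneg _))

theorem surjective_of_strongMono [CompleteSpace E] (hc : 0 < c)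
    (hmono : ∀ x y, c * ‖x - y‖ ^ 2 ≤ ⟪F x - F y, x - y⟫)
    (hlip : ∀ x (R : ℝ), ∃ L, LipschitzOnWith L F (closedBall x R)) : Surjective F := by
  intro b
  set R := 2 * ‖F b - b‖ / c
  obtain ⟨L, hL⟩ := hlip b R
  set lam := c / ((L : ℝ) ^ 2 + c ^ 2)
  set q := 1 - lam * c / 2 with hq
  have hlam : 0 < lam := by positivity
  have hlamc : lam * c ≤ 1 := by
    rw [div_mul_eq_mul_div, div_le_one (by positivity)]; nlinarith [sq_nonneg (L : ℝ)]
  set T : E → E := fun x => x - lam • (F x - b)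
  have hT : ∀ x y, T x - T y = (x - lam • F x) - (y - lam • F y) := fun x y => by
    simp only [T, smul_sub]; abel
  have hcontr : ∀ x ∈ closedBall b R, ∀ y ∈ closedBall b R, dist (T x) (T y) ≤ q * dist x y :=
    fun x hx y hy => by
      rw [dist_eq_norm, dist_eq_norm, hT]
      exact norm_sub_smul_sub_le hc (hmono x y) (hL.norm_sub_le hx hy)
  have hmaps : MapsTo T (closedBall b R) (closedBall b R) := fun x hx => by
    have hTb : dist (T b) b = lam * ‖F b - b‖ := by
      simp [T, norm_smul, Real.norm_of_nonneg hlam.le]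
    calc dist (T x) b ≤ dist (T x) (T b) + dist (T b) b := dist_triangle _ _ _
      _ ≤ q * R + lam * ‖F b - b‖ := by
          rw [hTb]; gcongr
          exact (hcontr x hx b (mem_closedBall_self (by positivity))).trans
            (mul_le_mul_of_nonneg_left hx (by rw [hq]; linarith))
      _ = R := by simp only [q, R]; field_simp; ring
  have hK : ContractingWith q.toNNReal (hmaps.restrict T _ _) :=
    ⟨by rw [Real.toNNReal_lt_one, hq]; linarith [mul_pos hlam hc],
      (LipschitzOnWith.of_dist_le' hcontr).mapsToRestrict hmaps⟩
  obtain ⟨x, -, hx, -⟩ := hK.exists_fixedPoint' isClosed_closedBall.isComplete hmaps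
    (mem_closedBall_self (by positivity)) (edist_ne_top _ _)
  refine ⟨x, ?_⟩
  have : lam • (F x - b) = 0 := sub_eq_self.1 hx
  exact sub_eq_zero.1 ((smul_eq_zero.1 this).resolve_left hlam.ne')

end StronglyMonotone

theorem measurable_uncurry_invFun {α X Y : Type*} [MeasurableSpace α]
    [MetricSpace X] [TopologicalSpace.SeparableSpace X] [Nonempty X] [MeasurableSpace X]
    [BorelSpace X] [MetricSpace Y] [SecondCountableTopology Y] [MeasurableSpace Y] [BorelSpace Y]
    {F : α → X → Y} (hF : Measurable (uncurry F)) (hcont : ∀ a, Continuous (F a))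
    (hanti : ∀ a, ∃ K, AntilipschitzWith K (F a)) (hsurj : ∀ a, Surjective (F a)) :
    Measurable (uncurry fun a => invFun (F a)) := by
  classical
  set e := TopologicalSpace.denseSeq X
  have he := TopologicalSpace.denseRange_denseSeq X
  -- `invFun (F a) y` is the limit of the first point of a dense sequence that `F a` maps
  -- `1/(m+1)`-close to `y`, because `F a` is antilipschitz.
  have hex : ∀ (m : ℕ) (p : α × Y), ∃ j, dist (F p.1 (e j)) p.2 < 1 / (m + 1) := by
    rintro m ⟨a, y⟩
    obtain ⟨x, rfl⟩ := hsurj a y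
    exact he.exists_mem_open (isOpen_ball.preimage (hcont a)) ⟨x, mem_ball_self (by positivity)⟩
  have hΨ : ∀ m, Measurable fun p => e (Nat.find (hex m p)) := fun m =>
    Measurable.find (fun _ => measurable_const) (fun j => measurableSet_lt
      ((hF.comp (measurable_fst.prodMk measurable_const)).dist measurable_snd) measurable_const)
      (hex m)
  refine measurable_of_tendsto_metrizable hΨ (tendsto_pi_nhds.2 ?_)
  rintro ⟨a, y⟩
  obtain ⟨K, hK⟩ := hanti a
  obtain ⟨x, rfl⟩ := hsurj a y
  rw [uncurry_apply_pair, leftInverse_invFun hK.injective x, tendsto_iff_dist_tendsto_zero]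
  refine squeeze_zero (fun _ => dist_nonneg) (fun m => ?_)
    (by simpa only [mul_zero] using tendsto_one_div_add_atTop_nhds_zero_nat.const_mul (K : ℝ))
  exact (hK.le_mul_dist _ _).trans
    (mul_le_mul_of_nonneg_left (Nat.find_spec (hex m (a, F a x))).le K.coe_nonneg)

namespace BackwardEuler

variable {E : Type*} [NormedAddCommGroup E] [InnerProductSpace ℝ E]

open scoped Classical in
-- Nothing is assumed of `f` outside `G`; there the identity keeps the step invertible.
noncomputable def step (G : Set ℝ) (k : ℝ) (f : ℝ → E → E) (t : ℝ) : E → E :=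
  if t ∈ G then fun x => x - k • f t x else id

noncomputable def resolvent (G : Set ℝ) (k : ℝ) (f : ℝ → E → E) (t : ℝ) : E → E :=
  invFun (step G k f t)

variable {G : Set ℝ} {k ν : ℝ} {f : ℝ → E → E} {t : ℝ}

theorem step_of_mem (ht : t ∈ G) : step G k f t = fun x => x - k • f t x := if_pos ht

theorem step_of_notMem (ht : t ∉ G) : step G k f t = id := if_neg ht

theorem strongMono_step (hk : 0 ≤ k) (ht : t ∈ G)
    (honesided : ∀ x y, ⟪f t x - f t y, x - y⟫ ≤ ν * ‖x - y‖ ^ 2) (x y : E) :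
    (1 - k * ν) * ‖x - y‖ ^ 2 ≤ ⟪step G k f t x - step G k f t y, x - y⟫ := by
  have : step G k f t x - step G k f t y = (x - y) - k • (f t x - f t y) := by
    simp only [step_of_mem ht, smul_sub]; abel
  rw [this, inner_sub_left, real_inner_smul_left, real_inner_self_eq_norm_sq]
  nlinarith [mul_le_mul_of_nonneg_left (honesided x y) hk]

theorem exists_antilipschitzWith_step (hk : 0 ≤ k) (hkν : k * ν < 1)
    (honesided : ∀ t ∈ G, ∀ x y : E, ⟪f t x - f t y, x - y⟫ ≤ ν * ‖x - y‖ ^ 2) (t : ℝ) :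
    ∃ K, AntilipschitzWith K (step G k f t) := by
  by_cases ht : t ∈ G
  · exact ⟨_, antilipschitzWith_of_strongMono (by linarith)
      (strongMono_step hk ht (honesided t ht))⟩
  · exact ⟨1, by rw [step_of_notMem ht]; exact AntilipschitzWith.id⟩

theorem lipschitzOnWith_step (ht : t ∈ G) {L : ℝ≥0} {s : Set E}
    (hL : LipschitzOnWith L (f t) s) : LipschitzOnWith (1 + ‖k‖₊ * L) (step G k f t) s := by
  rw [step_of_mem ht]
  exact LipschitzWith.id.lipschitzOnWith.sub ((lipschitzWith_smul k).comp_lipschitzOnWith hL)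

theorem continuous_step
    (hlip : ∀ t ∈ G, ∀ x (R : ℝ), ∃ L, LipschitzOnWith L (f t) (closedBall x R)) (t : ℝ) :
    Continuous (step G k f t) := by
  by_cases ht : t ∈ G
  · exact continuous_of_lipschitzOnWith_closedBall fun x R =>
      let ⟨_, hL⟩ := hlip t ht x R; ⟨_, lipschitzOnWith_step ht hL⟩
  · rw [step_of_notMem ht]; exact continuous_id

theorem bijective_step [CompleteSpace E] (hk : 0 ≤ k) (hkν : k * ν < 1)
    (honesided : ∀ t ∈ G, ∀ x y : E, ⟪f t x - f t y, x - y⟫ ≤ ν * ‖x - y‖ ^ 2)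
    (hlip : ∀ t ∈ G, ∀ x (R : ℝ), ∃ L, LipschitzOnWith L (f t) (closedBall x R)) (t : ℝ) :
    Bijective (step G k f t) := by
  refine ⟨(exists_antilipschitzWith_step hk hkν honesided t).choose_spec.injective, ?_⟩
  by_cases ht : t ∈ G
  · exact surjective_of_strongMono (by linarith) (strongMono_step hk ht (honesided t ht))
      fun x R => let ⟨_, hL⟩ := hlip t ht x R; ⟨_, lipschitzOnWith_step ht hL⟩
  · rw [step_of_notMem ht]; exact surjective_id

theorem step_resolvent (hsurj : Surjective (step G k f t)) (b : E) :
    step G k f t (resolvent G k f t b) = b :=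
  invFun_eq (hsurj b)

theorem resolvent_eq_iff (ht : t ∈ G) (hbij : Bijective (step G k f t)) {b x : E} :
    resolvent G k f t b = x ↔ x = b + k • f t x := by
  have : step G k f t x = b ↔ x = b + k • f t x := by
    rw [step_of_mem ht, sub_eq_iff_eq_add]
  rw [← this]
  constructor
  · rintro rfl; exact step_resolvent hbij.2 b
  · rintro rfl; exact leftInverse_invFun hbij.1 x

theorem resolvent_of_notMem (ht : t ∉ G) (b : E) : resolvent G k f t b = b := by
  rw [resolvent, step_of_notMem ht]
  exact leftInverse_invFun injective_id b

theorem norm_resolvent_le (hk : 0 ≤ k) (hkν : k * ν < 1) (ht : t ∈ G)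
    (honesided : ∀ x y, ⟪f t x - f t y, x - y⟫ ≤ ν * ‖x - y‖ ^ 2)
    (hbij : Bijective (step G k f t)) (b : E) :
    ‖resolvent G k f t b‖ ≤ (1 - k * ν)⁻¹ * ‖b + k • f t 0‖ := by
  have hc : 0 < 1 - k * ν := by linarith
  have h := (antilipschitzWith_of_strongMono hc (strongMono_step hk ht honesided)).le_mul_dist
    (resolvent G k f t b) 0
  rw [dist_zero_right, Real.coe_toNNReal _ (inv_nonneg.2 hc.le), dist_eq_norm,
    step_resolvent hbij.2] at h
  simpa [step_of_mem ht] using h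

theorem measurable_resolvent [MeasurableSpace E] [BorelSpace E] [SecondCountableTopology E]
    [CompleteSpace E] (hk : 0 ≤ k) (hkν : k * ν < 1) (hG : MeasurableSet G)
    (hf : Measurable (uncurry f))
    (honesided : ∀ t ∈ G, ∀ x y : E, ⟪f t x - f t y, x - y⟫ ≤ ν * ‖x - y‖ ^ 2)
    (hlip : ∀ t ∈ G, ∀ x (R : ℝ), ∃ L, LipschitzOnWith L (f t) (closedBall x R)) :
    Measurable (uncurry (resolvent G k f)) := by
  classical
  have hstep :
      uncurry (step G k f) = fun p => if p.1 ∈ G then p.2 - k • uncurry f p else p.2 := by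
    ext1 ⟨t, x⟩
    by_cases ht : t ∈ G <;> simp [step_of_mem, step_of_notMem, ht]
  refine measurable_uncurry_invFun ?_ (continuous_step hlip)
    (exists_antilipschitzWith_step hk hkν honesided)
    fun t => (bijective_step hk hkν honesided hlip t).2
  rw [hstep]
  exact Measurable.ite (hG.preimage measurable_fst) (measurable_snd.sub (hf.const_smul k))
    measurable_snd

end BackwardEuler

namespace BackwardEuler

variable {E Ω : Type*} [MeasurableSpace E] {Φ : ℝ → E → E} {u₀ : E} {ξ : ℕ → Ω → ℝ}

def scheme (Φ : ℝ → E → E) (u₀ : E) (ξ : ℕ → Ω → ℝ) : ℕ → Ω → E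
  | 0 => fun _ => u₀
  | n + 1 => fun ω => Φ (ξ (n + 1) ω) (scheme Φ u₀ ξ n ω)

theorem measurable_scheme {m : MeasurableSpace Ω} (hΦ : Measurable (uncurry Φ)) {n : ℕ}
    (hξ : ∀ j, 1 ≤ j → j ≤ n → Measurable[m] (ξ j)) : Measurable[m] (scheme Φ u₀ ξ n) := by
  induction n with
  | zero => exact measurable_const
  | succ n ih =>
    exact hΦ.comp ((hξ _ le_add_self le_rfl).prodMk
      (ih fun j h1 h2 => hξ j h1 (h2.trans n.le_succ)))

theorem memLp_scheme [NormedAddCommGroup E] [BorelSpace E] [SecondCountableTopology E]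
    [MeasurableSpace Ω] {P : Measure Ω} [IsFiniteMeasure P] {p : ℝ≥0∞} {N : ℕ} {a : ℝ} {h : ℝ → ℝ}
    (hΦ : Measurable (uncurry Φ)) (hξ : ∀ n, Measurable (ξ n))
    (hbound : ∀ t b, ‖Φ t b‖ ≤ a * ‖b‖ + h t)
    (hh : ∀ n, 1 ≤ n → n ≤ N → MemLp (fun ω => h (ξ n ω)) p P) :
    ∀ n ≤ N, MemLp (scheme Φ u₀ ξ n) p P := by
  intro n
  induction n with
  | zero => exact fun _ => memLp_const u₀
  | succ n ih =>
    intro hn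
    refine MemLp.of_le (((ih (by omega)).norm.const_mul a).add (hh _ le_add_self hn))
      (measurable_scheme hΦ fun j _ _ => hξ j).aestronglyMeasurable (ae_of_all _ fun ω => ?_)
    exact (hbound _ _).trans (le_abs_self _)

variable {d : ℕ} {Ω : Type} [MeasurableSpace Ω] {P : Measure Ω} {N : ℕ} {k ν : ℝ} {G : Set ℝ}
  {f : ℝ → EuclideanSpace ℝ (Fin d) → EuclideanSpace ℝ (Fin d)} {g : ℝ → ℝ}
  {𝓕 : ℕ → MeasurableSpace Ω} {ξ : ℕ → Ω → ℝ} {u₀ : EuclideanSpace ℝ (Fin d)}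

theorem rbeSolution_scheme [IsFiniteMeasure P] (hk : 0 < k) (hkν : k * ν < 1)
    (hG : MeasurableSet G) (hf : Measurable (uncurry f))
    (honesided : ∀ t ∈ G, ∀ x y : EuclideanSpace ℝ (Fin d),
      ⟪f t x - f t y, x - y⟫ ≤ ν * ‖x - y‖ ^ 2)
    (hlip : ∀ t ∈ G, ∀ x (R : ℝ), ∃ L, LipschitzOnWith L (f t) (closedBall x R))
    (hg : ∀ t ∈ G, ‖f t 0‖ ≤ g t)
    (hξ : ∀ n, Measurable (ξ n)) (hξ𝓕 : ∀ n j, 1 ≤ j → j ≤ n → Measurable[𝓕 n] (ξ j))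
    (hξG : ∀ n, 1 ≤ n → n ≤ N → ∀ᵐ ω ∂P, ξ n ω ∈ G)
    (hgξ : ∀ n, 1 ≤ n → n ≤ N → MemLp (fun ω => g (ξ n ω)) 2 P) :
    RBESolution P N k 𝓕 ξ f u₀ (scheme (resolvent G k f) u₀ ξ) := by
  set U := scheme (resolvent G k f) u₀ ξ
  set c := 1 - k * ν
  have hc : 0 < c := by linarith
  have hΦ := measurable_resolvent hk.le hkν hG hf honesided hlip
  have hbij := bijective_step hk.le hkν honesided hlip
  have hbound : ∀ t b, ‖resolvent G k f t b‖ ≤ (1 + c⁻¹) * ‖b‖ + c⁻¹ * k * |g t| := by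
    intro t b
    by_cases ht : t ∈ G
    · refine (norm_resolvent_le hk.le hkν ht (honesided t ht) (hbij t) b).trans ?_
      have : ‖b + k • f t 0‖ ≤ ‖b‖ + k * |g t| := by
        refine (norm_add_le _ _).trans ?_
        rw [norm_smul, Real.norm_of_nonneg hk.le]
        gcongr
        exact (hg t ht).trans (le_abs_self _)
      nlinarith [inv_pos.2 hc, norm_nonneg b]
    · rw [resolvent_of_notMem ht]
      have := mul_nonneg (inv_pos.2 hc).le (norm_nonneg b)
      have := mul_nonneg (mul_nonneg (inv_pos.2 hc).le hk.le) (abs_nonneg (g t))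
      linarith
  have hU : ∀ n ≤ N, MemLp (U n) 2 P :=
    memLp_scheme hΦ hξ hbound fun n h1 h2 => ((hgξ n h1 h2).abs.const_mul _)
  have hUeq : ∀ n, 1 ≤ n → n ≤ N → ∀ᵐ ω ∂P, U n ω = U (n - 1) ω + k • f (ξ n ω) (U n ω) := by
    rintro (_ | n) h1 h2
    · omega
    filter_upwards [hξG _ h1 h2] with ω hω
    exact (resolvent_eq_iff hω (hbij _)).1 rfl
  refine ⟨fun _ => rfl, fun n h1 h2 => ⟨measurable_scheme hΦ (hξ𝓕 n), hU n h2,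
    hf.comp ((hξ𝓕 n n h1 le_rfl).prodMk (measurable_scheme hΦ (hξ𝓕 n))), ?_, hUeq n h1 h2⟩⟩
  refine (((hU n h2).sub (hU (n - 1) (by omega))).const_smul k⁻¹).ae_eq ?_
  filter_upwards [hUeq n h1 h2] with ω hω
  rw [Pi.smul_apply, Pi.sub_apply, eq_comm, eq_inv_smul_iff₀ hk.ne', eq_sub_iff_add_eq']
  exact hω.symm

theorem ae_eq_scheme_of_rbeSolution (hk : 0 ≤ k) (hkν : k * ν < 1)
    (honesided : ∀ t ∈ G, ∀ x y : EuclideanSpace ℝ (Fin d),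
      ⟪f t x - f t y, x - y⟫ ≤ ν * ‖x - y‖ ^ 2)
    (hlip : ∀ t ∈ G, ∀ x (R : ℝ), ∃ L, LipschitzOnWith L (f t) (closedBall x R))
    (hξG : ∀ n, 1 ≤ n → n ≤ N → ∀ᵐ ω ∂P, ξ n ω ∈ G)
    {U : ℕ → Ω → EuclideanSpace ℝ (Fin d)} (hU : RBESolution P N k 𝓕 ξ f u₀ U) :
    ∀ n ≤ N, U n =ᵐ[P] scheme (resolvent G k f) u₀ ξ n := by
  intro n
  induction n with
  | zero => exact fun _ => ae_of_all _ hU.1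
  | succ n ih =>
    intro hn
    filter_upwards [(hU.2 _ le_add_self hn).2.2.2.2, hξG _ le_add_self hn, ih (by omega)]
      with ω hω hωG hωn
    rw [Nat.add_sub_cancel, hωn] at hω
    exact ((resolvent_eq_iff hωG (bijective_step hk hkν honesided hlip _)).2 hω).symm

end BackwardEuler

theorem map_add_mul_of_map_eq_restrict_Icc {Ω : Type*} [MeasurableSpace Ω] {P : Measure Ω}
    {τ : Ω → ℝ} (hτ : Measurable τ) (hunif : P.map τ = volume.restrict (Icc 0 1)) (a : ℝ)
    {k : ℝ} (hk : 0 < k) :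
    P.map (fun ω => a + k * τ ω) = ENNReal.ofReal k⁻¹ • volume.restrict (Icc a (a + k)) := by
  have haff : Measurable fun s : ℝ => a + k * s := by fun_prop
  rw [show (fun ω => a + k * τ ω) = (fun s => a + k * s) ∘ τ from rfl,
    ← Measure.map_map haff hτ, hunif]
  ext A hA
  have hpre : (fun s => a + k * s) ⁻¹' A ∩ Icc 0 1 =
      (fun s => k * s) ⁻¹' ((fun s => a + s) ⁻¹' (A ∩ Icc a (a + k))) := by
    ext s
    simp only [mem_inter_iff, mem_preimage, mem_Icc]
    constructor <;> rintro ⟨h, h0, h1⟩ <;> refine ⟨h, ?_, ?_⟩ <;> nlinarith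
  rw [Measure.map_apply haff hA, Measure.restrict_apply (haff hA), hpre,
    Real.volume_preimage_mul_left hk.ne', measure_preimage_add, Measure.smul_apply,
    Measure.restrict_apply hA, abs_of_pos (inv_pos.2 hk), smul_eq_mul]

theorem map_randomNode_le_smul_restrict_Icc {Ω : Type*} [MeasurableSpace Ω] {P : Measure Ω}
    {τ : Ω → ℝ} (hτ : Measurable τ) (hunif : P.map τ = volume.restrict (Icc 0 1))
    {k T : ℝ} {n N : ℕ} (hk0 : 0 < k) (hk : k = T / N) (h1 : 1 ≤ n) (h2 : n ≤ N) :
    P.map (fun ω => ((n : ℝ) - 1) * k + k * τ ω) ≤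
      ENNReal.ofReal k⁻¹ • volume.restrict (Icc 0 T) := by
  have hn1 : (1 : ℝ) ≤ n := by exact_mod_cast h1
  have hnN : (n : ℝ) ≤ N := by exact_mod_cast h2
  have hTk : T = N * k := by rw [hk, mul_div_cancel₀ _ (by linarith : (N : ℝ) ≠ 0)]
  rw [map_add_mul_of_map_eq_restrict_Icc hτ hunif _ hk0]
  gcongr
  · exact mul_nonneg (sub_nonneg.2 hn1) hk0.le
  · nlinarith

theorem measurable_sup_biSup_comap {Ω ι β : Type*} [mβ : MeasurableSpace β]
    (m₀ : MeasurableSpace Ω) {s : Finset ι} {τ : ι → Ω → β} {j : ι} (hj : j ∈ s) :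
    Measurable[m₀ ⊔ ⨆ i ∈ s, mβ.comap (τ i)] (τ j) :=
  Measurable.of_comap_le <| le_sup_of_le_right <|
    le_iSup₂_of_le (f := fun i (_ : i ∈ s) => mβ.comap (τ i)) j hj le_rfl

theorem stmt5_general
    (T : ℝ) (hT : 0 < T) (d : ℕ) (u₀ : EuclideanSpace ℝ (Fin d))
    (f : ℝ → EuclideanSpace ℝ (Fin d) → EuclideanSpace ℝ (Fin d))
    (hf_meas : Measurable (Function.uncurry f))
    (Nf : Set ℝ) (hNf_null : volume Nf = 0)
    (ν : ℝ)
    (hf_onesided : ∀ t ∈ Set.Icc (0:ℝ) T \ Nf, ∀ x y : EuclideanSpace ℝ (Fin d),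
      ⟪f t x - f t y, x - y⟫ ≤ ν * ‖x - y‖ ^ 2)
    (g : ℝ → ℝ)
    (hg_L2 : MemLp g 2 (volume.restrict (Set.Icc (0:ℝ) T)))
    (hf_bound : ∀ t ∈ Set.Icc (0:ℝ) T \ Nf, ‖f t 0‖ ≤ g t)
    (hf_lip : ∀ K : Set (EuclideanSpace ℝ (Fin d)), IsCompact K →
      ∃ LK : ℝ → ℝ, Measurable LK ∧ (∀ t, 0 ≤ LK t) ∧
        MemLp LK 2 (volume.restrict (Set.Icc (0:ℝ) T)) ∧
        ∀ t ∈ Set.Icc (0:ℝ) T \ Nf, ∀ x ∈ K, ∀ y ∈ K,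
          ‖f t x - f t y‖ ≤ LK t * ‖x - y‖)
    -- the randomized temporal setting
    (N : ℕ) (hN : 0 < N) (k : ℝ) (hk : k = T / N) (hkν : k * ν < 1)
    (Ω : Type) [mΩ : MeasurableSpace Ω] (P : Measure Ω) [IsProbabilityMeasure P]
    (τ : ℕ → Ω → ℝ) (hτ_meas : ∀ n, Measurable (τ n))
    (hτ_unif : ∀ n, 1 ≤ n → n ≤ N →
      Measure.map (τ n) P = volume.restrict (Set.Icc (0:ℝ) 1))
    (ξ : ℕ → Ω → ℝ) (hξ : ∀ n ω, ξ n ω = ((n : ℝ) - 1) * k + k * τ n ω)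
    (𝓕 : ℕ → MeasurableSpace Ω)
    (h𝓕 : ∀ n, 𝓕 n = MeasurableSpace.generateFrom {s : Set Ω | P s = 0} ⊔
      ⨆ j ∈ Finset.Icc 1 n, MeasurableSpace.comap (τ j)
        (inferInstance : MeasurableSpace ℝ)) :
    ∃ U : ℕ → Ω → EuclideanSpace ℝ (Fin d),
      RBESolution P N k 𝓕 ξ f u₀ U ∧
      ∀ U' : ℕ → Ω → EuclideanSpace ℝ (Fin d),
        RBESolution P N k 𝓕 ξ f u₀ U' → ∀ n ≤ N, U' n =ᵐ[P] U n := by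
  have hk0 : 0 < k := hk ▸ div_pos hT (Nat.cast_pos.2 hN)
  obtain ⟨N', hNfN', hN'_meas, hN'_null⟩ := exists_measurable_superset_of_null hNf_null
  have hG : Icc 0 T \ N' ⊆ Icc 0 T \ Nf := sdiff_subset_sdiff_right hNfN'
  have honesided := fun t ht => hf_onesided t (hG ht)
  have hlip : ∀ t ∈ Icc 0 T \ N', ∀ x (R : ℝ), ∃ L, LipschitzOnWith L (f t) (closedBall x R) := by
    intro t ht x R
    obtain ⟨LK, -, -, -, hLK⟩ := hf_lip _ (isCompact_closedBall x R)
    exact ⟨_, LipschitzOnWith.of_dist_le' fun y hy z hz => by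
      simpa only [dist_eq_norm] using hLK t (hG ht) y hy z hz⟩
  have hξ_eq : ∀ n, ξ n = fun ω => ((n : ℝ) - 1) * k + k * τ n ω := fun n => funext (hξ n)
  have hξ_meas : ∀ n, Measurable (ξ n) := fun n => by rw [hξ_eq]; fun_prop
  have hξ𝓕 : ∀ n j, 1 ≤ j → j ≤ n → Measurable[𝓕 n] (ξ j) := fun n j h1 h2 => by
    rw [hξ_eq, h𝓕]
    exact measurable_const.add
      ((measurable_sup_biSup_comap _ (Finset.mem_Icc.2 ⟨h1, h2⟩)).const_mul k)
  have hlaw : ∀ n, 1 ≤ n → n ≤ N →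
      P.map (ξ n) ≤ ENNReal.ofReal k⁻¹ • volume.restrict (Icc 0 T) := fun n h1 h2 =>
    hξ_eq n ▸ map_randomNode_le_smul_restrict_Icc (hτ_meas n) (hτ_unif n h1 h2) hk0 hk h1 h2
  have hξG : ∀ n, 1 ≤ n → n ≤ N → ∀ᵐ ω ∂P, ξ n ω ∈ Icc 0 T \ N' := fun n h1 h2 =>
    ae_of_ae_map (hξ_meas n).aemeasurable <|
      (Measure.absolutelyContinuous_of_le_smul (hlaw n h1 h2)).ae_le <| by
        filter_upwards [ae_restrict_mem measurableSet_Icc,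
          ae_restrict_of_ae (measure_eq_zero_iff_ae_notMem.1 hN'_null)] with t h1 h2
        exact ⟨h1, h2⟩
  exact ⟨_, BackwardEuler.rbeSolution_scheme hk0 hkν (measurableSet_Icc.diff hN'_meas) hf_meas
    honesided hlip (fun t ht => hf_bound t (hG ht)) hξ_meas hξ𝓕 hξG fun n h1 h2 =>
      ((hg_L2.smul_measure ENNReal.ofReal_ne_top).mono_measure (hlaw n h1 h2)).comp_of_map
        (hξ_meas n).aemeasurable,
    fun _ hU' => BackwardEuler.ae_eq_scheme_of_rbeSolution hk0.le hkν honesided hlip hξG hU'⟩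

/-- Under Assumption A, if `kν < 1` with `k = T/N`, the
randomized backward Euler scheme has a unique solution in the class `G²_N` of
square-integrable adapted grid functions (uniqueness holding almost surely). -/
theorem stmt5
    (T : ℝ) (hT : 0 < T) (d : ℕ) (u₀ : EuclideanSpace ℝ (Fin d))
    (f : ℝ → EuclideanSpace ℝ (Fin d) → EuclideanSpace ℝ (Fin d))
    (hf_meas : Measurable (Function.uncurry f))
    (Nf : Set ℝ) (hNf_null : volume Nf = 0)
    (ν : ℝ) (hν : 0 ≤ ν)
    (hf_onesided : ∀ t ∈ Set.Icc (0:ℝ) T \ Nf, ∀ x y : EuclideanSpace ℝ (Fin d),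
      ⟪f t x - f t y, x - y⟫ ≤ ν * ‖x - y‖ ^ 2)
    (g : ℝ → ℝ) (hg_meas : Measurable g) (hg_nonneg : ∀ t, 0 ≤ g t)
    (hg_L2 : MemLp g 2 (volume.restrict (Set.Icc (0:ℝ) T)))
    (hf_bound : ∀ t ∈ Set.Icc (0:ℝ) T \ Nf, ‖f t 0‖ ≤ g t)
    (hf_lip : ∀ K : Set (EuclideanSpace ℝ (Fin d)), IsCompact K →
      ∃ LK : ℝ → ℝ, Measurable LK ∧ (∀ t, 0 ≤ LK t) ∧
        MemLp LK 2 (volume.restrict (Set.Icc (0:ℝ) T)) ∧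
        ∀ t ∈ Set.Icc (0:ℝ) T \ Nf, ∀ x ∈ K, ∀ y ∈ K,
          ‖f t x - f t y‖ ≤ LK t * ‖x - y‖)
    -- the randomized temporal setting
    (N : ℕ) (hN : 0 < N) (k : ℝ) (hk : k = T / N) (hkν : k * ν < 1)
    (Ω : Type) [mΩ : MeasurableSpace Ω] (P : Measure Ω) [IsProbabilityMeasure P]
    (hP_complete : ∀ s : Set Ω, P s = 0 → MeasurableSet s)
    (τ : ℕ → Ω → ℝ) (hτ_meas : ∀ n, Measurable (τ n))
    (hτ_indep : ProbabilityTheory.iIndepFun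
      (m := fun _ : Fin N => (inferInstance : MeasurableSpace ℝ))
      (fun i : Fin N => τ (i + 1)) P)
    (hτ_unif : ∀ n, 1 ≤ n → n ≤ N →
      Measure.map (τ n) P = volume.restrict (Set.Icc (0:ℝ) 1))
    (ξ : ℕ → Ω → ℝ) (hξ : ∀ n ω, ξ n ω = ((n : ℝ) - 1) * k + k * τ n ω)
    (𝓕 : ℕ → MeasurableSpace Ω)
    (h𝓕 : ∀ n, 𝓕 n = MeasurableSpace.generateFrom {s : Set Ω | P s = 0} ⊔
      ⨆ j ∈ Finset.Icc 1 n, MeasurableSpace.comap (τ j)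
        (inferInstance : MeasurableSpace ℝ)) :
    ∃ U : ℕ → Ω → EuclideanSpace ℝ (Fin d),
      RBESolution P N k 𝓕 ξ f u₀ U ∧
      ∀ U' : ℕ → Ω → EuclideanSpace ℝ (Fin d),
        RBESolution P N k 𝓕 ξ f u₀ U' → ∀ n ≤ N, U' n =ᵐ[P] U n :=
  stmt5_general T hT d u₀ f hf_meas Nf hNf_null ν hf_onesided g hg_L2 hf_bound hf_lip N hN k hk hkν
    Ω (mΩ := mΩ) P τ hτ_meas hτ_unif ξ hξ 𝓕 h𝓕
end

section
/- Let 𝒜 satisfy Assumption B, let f ∈ L²(0,T;H), u₀ ∈ H, let V_h ⊆ V be a finite-dimensional subspace, and let N ∈ ℕ with step size k = T/N. Then there exists a unique solution (U_h^n)_{n=0,…,N} of the fully discrete randomized backward Euler–Galerkin scheme such that for every n ∈ {1,…,N} the random variable U_h^n : Ω → V_h is F_n-measurable and P-almost surely V_h-valued; i.e., U_h^0 ∈ V_h is the unique element with (j U_h^0, j w)_H = (u₀, j w)_H for all w ∈ V_h, and P-almost surely, for every n ∈ {1,…,N}, (j U_h^n, j w)_H + k ⟨𝒜(ξ_n) U_h^n,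 w⟩ = k (f(ξ_n), j w)_H + (j U_h^{n−1}, j w)_H for all w ∈ V_h. -/
open MeasureTheory RealInnerProductSpace

/-!
Each step of the scheme is the equation `B_t x = F` on `V_h`, where `B_t x` is the Riesz
representative of `w ↦ (j x, j w)_H + k ⟨𝒜(t) x, w⟩`. Assumption B makes `B_t` Lipschitz and
`kμ`-strongly monotone, so Zarantonello's map `x ↦ x - ρ (B_t x - F)` is a contraction for small
`ρ > 0`. Its iterates started at `0` are jointly measurable in `(t, F)` and converge to the
solution, so the solution operator is measurable and `U_h^n`, computed from `ξ_n` and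
`U_h^{n-1}`, is `F_n`-measurable. The law of `ξ_n` is absolutely continuous with respect to
Lebesgue measure on `[0, T]`, so `f(ξ_n)` may be replaced by a measurable representative of `f`
almost surely. Uniqueness follows by testing the difference of two solutions against itself:
strong monotonicity for `n ≥ 1`, injectivity of `j` for `n = 0`.
-/

/-- The grid function `U` solves the fully discrete randomized backward
Euler–Galerkin scheme for `u̇ + 𝒜(t)u = f` in the Galerkin space `Vh`:
`U 0` is the `H`-orthogonal projection of `u₀` onto `Vh`, each `U n`
(`1 ≤ n ≤ N`) is `𝓕 n`-measurable and, almost surely, `Vh`-valued with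
`(j Uⁿ, j w)_H + k ⟨𝒜(ξₙ) Uⁿ, w⟩ = k (f(ξₙ), j w)_H + (j Uⁿ⁻¹, j w)_H`
for all `w ∈ Vh`. -/
def SolvesRBEGalerkin {V H : Type} [NormedAddCommGroup V] [InnerProductSpace ℝ V]
    [MeasurableSpace V]
    [NormedAddCommGroup H] [InnerProductSpace ℝ H]
    {Ω : Type} [MeasurableSpace Ω] (P : Measure Ω)
    (j : V →L[ℝ] H) (𝒜 : ℝ → V → StrongDual ℝ V) (f : ℝ → H) (u₀ : H)
    (Vh : Submodule ℝ V) (N : ℕ) (k : ℝ)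
    (𝓕 : ℕ → MeasurableSpace Ω) (ξ : ℕ → Ω → ℝ) (U : ℕ → Ω → V) : Prop :=
  (∀ ω, U 0 ω ∈ Vh ∧ ∀ w ∈ Vh, ⟪j (U 0 ω), j w⟫ = ⟪u₀, j w⟫) ∧
  (∀ n, 1 ≤ n → n ≤ N → Measurable[𝓕 n] (U n)) ∧
  (∀ n, 1 ≤ n → n ≤ N → ∀ᵐ ω ∂P, U n ω ∈ Vh ∧
    ∀ w ∈ Vh, ⟪j (U n ω), j w⟫ + k * 𝒜 (ξ n ω) (U n ω) w
      = k * ⟪f (ξ n ω), j w⟫ + ⟪j (U (n - 1) ω), j w⟫)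

section Zarantonello

variable {E : Type*} [NormedAddCommGroup E] [InnerProductSpace ℝ E]

def zarantonelloMap (ρ : ℝ) (B : E → E) (F x : E) : E := x - ρ • (B x - F)

theorem zarantonelloMap_isFixedPt_iff {ρ : ℝ} (hρ : ρ ≠ 0) {B : E → E} {F x : E} :
    Function.IsFixedPt (zarantonelloMap ρ B F) x ↔ B x = F := by
  simp [Function.IsFixedPt, zarantonelloMap, hρ, sub_eq_zero]

theorem contractingWith_zarantonelloMap {B : E → E} {C m : ℝ} (hm : 0 < m) (hmC : m ≤ C)
    (hlip : ∀ x y, ‖B x - B y‖ ≤ C * ‖x - y‖)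
    (hmono : ∀ x y, m * ‖x - y‖ ^ 2 ≤ ⟪B x - B y, x - y⟫) (F : E) :
    ContractingWith (Real.sqrt (1 - (m / C) ^ 2)).toNNReal
      (zarantonelloMap (m / C ^ 2) B F) := by
  have hC : 0 < C := hm.trans_le hmC
  have hmC' : (m / C) ^ 2 ≤ 1 := pow_le_one₀ (by positivity) ((div_le_one hC).2 hmC)
  refine ⟨Real.toNNReal_lt_one.2 ((Real.sqrt_lt' one_pos).2 (by simp; positivity)),
    LipschitzWith.of_dist_le' fun x y => ?_⟩
  -- `ρ = m / C ^ 2` minimises the squared contraction factor `1 - 2 ρ m + ρ ^ 2 C ^ 2`.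
  set ρ := m / C ^ 2
  set d := x - y
  set e := B x - B y
  have hsq : ‖d - ρ • e‖ ^ 2 ≤ (1 - (m / C) ^ 2) * ‖d‖ ^ 2 := by
    have he : ‖e‖ ^ 2 ≤ C ^ 2 * ‖d‖ ^ 2 := by
      rw [← mul_pow]; exact pow_le_pow_left₀ (norm_nonneg _) (hlip x y) 2
    rw [norm_sub_sq_real, real_inner_smul_right, real_inner_comm, norm_smul, mul_pow,
      Real.norm_eq_abs, sq_abs]
    calc ‖d‖ ^ 2 - 2 * (ρ * ⟪e, d⟫) + ρ ^ 2 * ‖e‖ ^ 2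
        ≤ ‖d‖ ^ 2 - 2 * (ρ * (m * ‖d‖ ^ 2)) + ρ ^ 2 * (C ^ 2 * ‖d‖ ^ 2) := by
          gcongr
          exact hmono x y
      _ = (1 - (m / C) ^ 2) * ‖d‖ ^ 2 := by simp only [ρ]; field_simp; ring
  have hΦ : zarantonelloMap ρ B F x - zarantonelloMap ρ B F y = d - ρ • e := by
    simp only [zarantonelloMap, d, e, smul_sub]; abel
  rw [dist_eq_norm, dist_eq_norm, hΦ]
  refine (pow_le_pow_iff_left₀ (norm_nonneg _) (by positivity) two_ne_zero).1 ?_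
  rwa [mul_pow, Real.sq_sqrt (by linarith)]

theorem exists_measurable_solution_of_strongly_monotone {Ω : Type*} [MeasurableSpace Ω]
    [CompleteSpace E] [MeasurableSpace E] [BorelSpace E] [SecondCountableTopology E]
    {B : Ω → E → E} (hB : Measurable (Function.uncurry B)) {C m : ℝ} (hm : 0 < m)
    (hlip : ∀ ω x y, ‖B ω x - B ω y‖ ≤ C * ‖x - y‖)
    (hmono : ∀ ω x y, m * ‖x - y‖ ^ 2 ≤ ⟪B ω x - B ω y, x - y⟫) :
    ∃ S : Ω → E → E, Measurable (Function.uncurry S) ∧ ∀ ω F, B ω (S ω F) = F := by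
  have hlip' : ∀ ω x y, ‖B ω x - B ω y‖ ≤ max C m * ‖x - y‖ := fun ω x y =>
    (hlip ω x y).trans (by gcongr; exact le_max_left _ _)
  have hcontr : ∀ ω F, ContractingWith _ (zarantonelloMap (m / max C m ^ 2) (B ω) F) :=
    fun ω => contractingWith_zarantonelloMap hm (le_max_right C m) (hlip' ω) (hmono ω)
  refine ⟨fun ω F => (hcontr ω F).fixedPoint, ?_, fun ω F => ?_⟩
  · have hiter : ∀ n, Measurable fun p : Ω × E =>
        (zarantonelloMap (m / max C m ^ 2) (B p.1) p.2)^[n] 0 := by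
      intro n
      induction n with
      | zero => exact measurable_const
      | succ n ih =>
        simp only [Function.iterate_succ_apply', zarantonelloMap]
        exact ih.sub (((hB.comp (measurable_fst.prodMk ih)).sub measurable_snd).const_smul _)
    exact measurable_of_tendsto_metrizable hiter
      (tendsto_pi_nhds.2 fun p => (hcontr p.1 p.2).tendsto_iterate_fixedPoint 0)
  · exact (zarantonelloMap_isFixedPt_iff (by positivity)).1 (hcontr ω F).fixedPoint_isFixedPt

end Zarantonello

theorem measurable_toDual_symm {α E : Type*} [MeasurableSpace α] [NormedAddCommGroup E]
    [InnerProductSpace ℝ E] [FiniteDimensional ℝ E] [MeasurableSpace E] [BorelSpace E]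
    {ℓ : α → StrongDual ℝ E} (h : ∀ w, Measurable fun a => ℓ a w) :
    Measurable fun a => (InnerProductSpace.toDual ℝ E).symm (ℓ a) := by
  let b := stdOrthonormalBasis ℝ E
  have hsum : (fun a => (InnerProductSpace.toDual ℝ E).symm (ℓ a))
      = fun a => ∑ i, ℓ a (b i) • b i := by
    ext a
    conv_lhs => rw [← b.sum_repr' ((InnerProductSpace.toDual ℝ E).symm (ℓ a))]
    refine Finset.sum_congr rfl fun i _ => ?_
    rw [real_inner_comm, InnerProductSpace.toDual_symm_apply]
  rw [hsum]
  exact Finset.measurable_sum _ fun i _ => (h (b i)).smul_const _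

section Galerkin

variable {V H : Type*} [NormedAddCommGroup V] [InnerProductSpace ℝ V]
  [NormedAddCommGroup H] [InnerProductSpace ℝ H]
  (j : V →L[ℝ] H) (𝒜 : ℝ → V → StrongDual ℝ V) (Vh : Submodule ℝ V) [FiniteDimensional ℝ Vh]
  (k : ℝ)

noncomputable def galerkinOp (t : ℝ) (x : Vh) : Vh :=
  (InnerProductSpace.toDual ℝ Vh).symm
    ((innerSL ℝ (j x)).comp (j.comp Vh.subtypeL) + k • (𝒜 t x).comp Vh.subtypeL)

noncomputable def galerkinLoad (g : ℝ → H) (t : ℝ) (p : Vh) : Vh :=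
  (InnerProductSpace.toDual ℝ Vh).symm
    (k • (innerSL ℝ (g t)).comp (j.comp Vh.subtypeL) +
      (innerSL ℝ (j p)).comp (j.comp Vh.subtypeL))

variable {j 𝒜 Vh k}

theorem inner_galerkinOp (t : ℝ) (x w : Vh) :
    ⟪galerkinOp j 𝒜 Vh k t x, w⟫ = ⟪j x, j w⟫ + k * 𝒜 t x w := by
  rw [galerkinOp, InnerProductSpace.toDual_symm_apply]
  simp

theorem inner_galerkinLoad (g : ℝ → H) (t : ℝ) (p w : Vh) :
    ⟪galerkinLoad j Vh k g t p, w⟫ = k * ⟪g t, j w⟫ + ⟪j p, j w⟫ := by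
  rw [galerkinLoad, InnerProductSpace.toDual_symm_apply]
  simp

theorem norm_galerkinOp_sub_le {t L : ℝ} (hk : 0 ≤ k) (hL : 0 ≤ L)
    (hlip : ∀ v₁ v₂, ‖𝒜 t v₁ - 𝒜 t v₂‖ ≤ L * ‖v₁ - v₂‖) (x y : Vh) :
    ‖galerkinOp j 𝒜 Vh k t x - galerkinOp j 𝒜 Vh k t y‖ ≤ (‖j‖ ^ 2 + k * L) * ‖x - y‖ := by
  rw [galerkinOp, galerkinOp, ← map_sub, LinearIsometryEquiv.norm_map]
  refine ContinuousLinearMap.opNorm_le_bound _ (by positivity) fun w => ?_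
  have hj : ∀ v : Vh, ‖j v‖ ≤ ‖j‖ * ‖v‖ := fun v => j.le_opNorm v
  have hA : ‖(𝒜 t x - 𝒜 t y) w‖ ≤ L * ‖x - y‖ * ‖w‖ :=
    ((𝒜 t x - 𝒜 t y).le_opNorm w).trans (by gcongr; exacts [hlip x y, le_rfl])
  calc _ = ‖⟪j (x - y : Vh), j w⟫ + k * (𝒜 t x - 𝒜 t y) w‖ := by
          simp [inner_sub_left]; ring_nf
    _ ≤ ‖j (x - y : Vh)‖ * ‖j w‖ + k * ‖(𝒜 t x - 𝒜 t y) w‖ := by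
          refine (norm_add_le _ _).trans ?_
          rw [norm_mul, Real.norm_of_nonneg hk]
          gcongr
          exact norm_inner_le_norm _ _
    _ ≤ ‖j‖ * ‖x - y‖ * (‖j‖ * ‖w‖) + k * (L * ‖x - y‖ * ‖w‖) := by
          gcongr <;> exact hj _
    _ = (‖j‖ ^ 2 + k * L) * ‖x - y‖ * ‖w‖ := by ring

theorem mul_norm_sub_sq_le_inner_galerkinOp_sub {t μ : ℝ} (hk : 0 ≤ k)
    (hmono : ∀ v₁ v₂, μ * ‖v₁ - v₂‖ ^ 2 ≤ (𝒜 t v₁ - 𝒜 t v₂) (v₁ - v₂)) (x y : Vh) :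
    k * μ * ‖x - y‖ ^ 2 ≤ ⟪galerkinOp j 𝒜 Vh k t x - galerkinOp j 𝒜 Vh k t y, x - y⟫ := by
  have hj : 0 ≤ ⟪j x - j y, j x - j y⟫ := real_inner_self_nonneg
  have hA : k * (μ * ‖x - y‖ ^ 2) ≤ k * (𝒜 t x - 𝒜 t y) (x - y : Vh) :=
    mul_le_mul_of_nonneg_left (hmono x y) hk
  simp only [inner_sub_left, inner_galerkinOp, Submodule.coe_sub, map_sub,
    sub_apply, inner_sub_right] at hj hA ⊢
  linarith

theorem measurable_galerkinOp [MeasurableSpace V] [BorelSpace V]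
    (hcont : ∀ t w, Continuous fun v => 𝒜 t v w) (hmeas : ∀ v w, Measurable fun t => 𝒜 t v w) :
    Measurable (Function.uncurry (galerkinOp j 𝒜 Vh k)) := by
  refine measurable_toDual_symm fun w => ?_
  have hA : Measurable fun p : ℝ × Vh => 𝒜 p.1 p.2 w :=
    (measurable_uncurry_of_continuous_of_measurable (u := fun (x : Vh) t => 𝒜 t x w)
      (fun t => (hcont t w).comp continuous_subtype_val) fun x => hmeas x w).comp measurable_swap
  have hj : Continuous fun x : Vh => ⟪j x, j w⟫ := by fun_prop
  exact (hj.measurable.comp measurable_snd).add (hA.const_mul k)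

theorem measurable_galerkinLoad [MeasurableSpace V] [BorelSpace V] {g : ℝ → H}
    (hg : StronglyMeasurable g) :
    Measurable (Function.uncurry (galerkinLoad j Vh k g)) := by
  refine measurable_toDual_symm fun w => ?_
  have hg' : Measurable fun t => ⟪g t, j w⟫ :=
    (hg.inner stronglyMeasurable_const).measurable
  have hj : Continuous fun x : Vh => ⟪j x, j w⟫ := by fun_prop
  exact ((hg'.comp measurable_fst).const_mul k).add (hj.measurable.comp measurable_snd)

end Galerkin

theorem exists_measurable_galerkinStep {V H : Type*} [NormedAddCommGroup V]
    [InnerProductSpace ℝ V] [MeasurableSpace V] [BorelSpace V] [NormedAddCommGroup H]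
    [InnerProductSpace ℝ H] (j : V →L[ℝ] H) {𝒜 : ℝ → V → StrongDual ℝ V} (Vh : Submodule ℝ V)
    [FiniteDimensional ℝ Vh] {T L μ k : ℝ} (hT : 0 ≤ T)
    (hA_meas : ∀ v₁ v₂ : V, Measurable fun t => 𝒜 t v₁ v₂) (hL : 0 ≤ L)
    (hA_lip : ∀ t ∈ Set.Icc 0 T, ∀ v₁ v₂ : V, ‖𝒜 t v₁ - 𝒜 t v₂‖ ≤ L * ‖v₁ - v₂‖)
    (hμ : 0 < μ) (hA_mono : ∀ t ∈ Set.Icc 0 T, ∀ v₁ v₂ : V,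
      μ * ‖v₁ - v₂‖ ^ 2 ≤ (𝒜 t v₁ - 𝒜 t v₂) (v₁ - v₂))
    (hk : 0 < k) {g : ℝ → H} (hg : StronglyMeasurable g) :
    ∃ Φ : ℝ × Vh → Vh, Measurable Φ ∧ ∀ t ∈ Set.Icc 0 T, ∀ (p : Vh), ∀ w ∈ Vh,
      ⟪j (Φ (t, p)), j w⟫ + k * 𝒜 t (Φ (t, p)) w = k * ⟪g t, j w⟫ + ⟪j p, j w⟫ := by
  -- Assumption B holds only on `[0, T]`; freezing `𝒜` outside it makes it hold for all `t`.
  let 𝒜c : ℝ → V → StrongDual ℝ V := Set.IccExtend hT fun t => 𝒜 t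
  have hmem : ∀ t, (Set.projIcc 0 T hT t : ℝ) ∈ Set.Icc 0 T := fun t => Subtype.prop _
  have hcont : ∀ t w, Continuous fun v => 𝒜c t v w := fun t w =>
    (LipschitzWith.of_dist_le' fun v₁ v₂ => by
      rw [dist_eq_norm, dist_eq_norm]; exact hA_lip _ (hmem t) v₁ v₂).continuous.clm_apply
      continuous_const
  have hmeas : ∀ v w, Measurable fun t => 𝒜c t v w := fun v w =>
    (hA_meas v w).comp (continuous_subtype_val.comp continuous_projIcc).measurable
  obtain ⟨S, hS_meas, hS⟩ := exists_measurable_solution_of_strongly_monotone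
    (measurable_galerkinOp (j := j) (Vh := Vh) (k := k) hcont hmeas) (mul_pos hk hμ)
    (fun t => norm_galerkinOp_sub_le hk.le hL (hA_lip _ (hmem t)))
    (fun t => mul_norm_sub_sq_le_inner_galerkinOp_sub hk.le (hA_mono _ (hmem t)))
  refine ⟨fun p => S p.1 (galerkinLoad j Vh k g p.1 p.2),
    hS_meas.comp (measurable_fst.prodMk (measurable_galerkinLoad hg)), fun t ht p w hw => ?_⟩
  have h := congrArg (⟪·, ⟨w, hw⟩⟫) (hS t (galerkinLoad j Vh k g t p))
  simpa only [inner_galerkinOp, inner_galerkinLoad, 𝒜c, Set.IccExtend_of_mem _ _ ht] using h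

theorem exists_galerkin_projection {V H : Type*} [NormedAddCommGroup V] [InnerProductSpace ℝ V]
    [NormedAddCommGroup H] [InnerProductSpace ℝ H] (j : V →L[ℝ] H) (Vh : Submodule ℝ V)
    [FiniteDimensional ℝ Vh] (u : H) : ∃ v ∈ Vh, ∀ w ∈ Vh, ⟪j v, j w⟫ = ⟪u, j w⟫ := by
  let K := Vh.map (j : V →ₗ[ℝ] H)
  obtain ⟨v, hv, hjv⟩ := Submodule.mem_map.1 (K.starProjection_apply_mem u)
  refine ⟨v, hv, fun w hw => ?_⟩
  have h := K.starProjection_inner_eq_zero u (j w) (Submodule.mem_map_of_mem hw)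
  rw [inner_sub_left] at h
  simp only [ContinuousLinearMap.coe_coe] at hjv
  rw [hjv]
  linarith

section Uniqueness

variable {V H : Type*} [NormedAddCommGroup V] [InnerProductSpace ℝ V]
  [NormedAddCommGroup H] [InnerProductSpace ℝ H] {j : V →L[ℝ] H} {Vh : Submodule ℝ V} {x y : V}

theorem eq_of_forall_inner_eq (hj : Function.Injective j) (hx : x ∈ Vh) (hy : y ∈ Vh)
    (h : ∀ w ∈ Vh, ⟪j x, j w⟫ = ⟪j y, j w⟫) : x = y := by
  have h0 := h (x - y) (Vh.sub_mem hx hy)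
  rw [← sub_eq_zero, ← inner_sub_left, ← map_sub, inner_self_eq_zero, map_eq_zero_iff j hj,
    sub_eq_zero] at h0
  exact h0

theorem eq_of_forall_galerkin_eq {a : V → StrongDual ℝ V} {k μ : ℝ} (hk : 0 < k) (hμ : 0 < μ)
    (hmono : ∀ v₁ v₂, μ * ‖v₁ - v₂‖ ^ 2 ≤ (a v₁ - a v₂) (v₁ - v₂)) (hx : x ∈ Vh) (hy : y ∈ Vh)
    (h : ∀ w ∈ Vh, ⟪j x, j w⟫ + k * a x w = ⟪j y, j w⟫ + k * a y w) : x = y := by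
  have h0 := h (x - y) (Vh.sub_mem hx hy)
  have hj : 0 ≤ ⟪j (x - y), j (x - y)⟫ := real_inner_self_nonneg
  have hA := hmono x y
  rw [map_sub] at h0 hj
  rw [inner_sub_left] at hj
  rw [sub_apply] at hA
  have hkA := mul_le_mul_of_nonneg_left hA hk.le
  have hnorm : ‖x - y‖ ^ 2 ≤ 0 := by nlinarith [mul_pos hk hμ]
  rw [← sub_eq_zero, ← norm_eq_zero]
  exact pow_eq_zero_iff two_ne_zero |>.1 (le_antisymm hnorm (sq_nonneg _))

end Uniqueness

theorem SolvesRBEGalerkin.ae_eq {V H Ω : Type} [NormedAddCommGroup V] [InnerProductSpace ℝ V]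
    [MeasurableSpace V] [NormedAddCommGroup H] [InnerProductSpace ℝ H] [MeasurableSpace Ω]
    {P : Measure Ω} {j : V →L[ℝ] H} {𝒜 : ℝ → V → StrongDual ℝ V} {f : ℝ → H} {u₀ : H}
    {Vh : Submodule ℝ V} {N : ℕ} {k μ : ℝ} {𝓕 : ℕ → MeasurableSpace Ω} {ξ : ℕ → Ω → ℝ}
    {U U' : ℕ → Ω → V} (hU : SolvesRBEGalerkin P j 𝒜 f u₀ Vh N k 𝓕 ξ U)
    (hU' : SolvesRBEGalerkin P j 𝒜 f u₀ Vh N k 𝓕 ξ U') (hj : Function.Injective j)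
    (hk : 0 < k) (hμ : 0 < μ) {s : Set ℝ}
    (hmono : ∀ t ∈ s, ∀ v₁ v₂, μ * ‖v₁ - v₂‖ ^ 2 ≤ (𝒜 t v₁ - 𝒜 t v₂) (v₁ - v₂))
    (hξ : ∀ n, 1 ≤ n → n ≤ N → ∀ᵐ ω ∂P, ξ n ω ∈ s) :
    ∀ n ≤ N, U' n =ᵐ[P] U n := by
  intro n hn
  induction n with
  | zero =>
    refine .of_forall fun ω => ?_
    obtain ⟨hx, hx_eq⟩ := hU'.1 ω
    obtain ⟨hy, hy_eq⟩ := hU.1 ω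
    exact eq_of_forall_inner_eq hj hx hy fun w hw => (hx_eq w hw).trans (hy_eq w hw).symm
  | succ n ih =>
    filter_upwards [ih (by omega), hU'.2.2 (n + 1) (by omega) hn, hU.2.2 (n + 1) (by omega) hn,
      hξ (n + 1) (by omega) hn] with ω hprev ⟨hx, hx_eq⟩ ⟨hy, hy_eq⟩ hξω
    refine eq_of_forall_galerkin_eq (j := j) hk hμ (hmono _ hξω) hx hy fun w hw => ?_
    rw [hx_eq w hw, hy_eq w hw, Nat.add_sub_cancel, hprev]

theorem absolutelyContinuous_map_affine_restrict_unitInterval {a k T : ℝ} (hk : 0 < k)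
    (ha : 0 ≤ a) (haT : a + k ≤ T) :
    (volume.restrict (Set.Icc (0 : ℝ) 1)).map (fun x => a + k * x)
      ≪ volume.restrict (Set.Icc 0 T) := by
  refine Measure.AbsolutelyContinuous.mk fun A hA hA0 => ?_
  have haff : Measurable fun x : ℝ => a + k * x := by fun_prop
  rw [Measure.restrict_apply hA] at hA0
  rw [Measure.map_apply haff hA, Measure.restrict_apply (haff hA)]
  refine measure_mono_null
    (t := (fun x => k * x) ⁻¹' ((fun y => a + y) ⁻¹' (A ∩ Set.Icc 0 T))) ?_ ?_
  · rintro x ⟨hxA, hx0, hx1⟩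
    refine ⟨hxA, ?_, ?_⟩ <;> simp only <;> nlinarith
  · rw [Real.volume_preimage_mul_left hk.ne', measure_preimage_add, hA0, mul_zero]

section Filtration

variable {Ω X : Type*} [mX : MeasurableSpace X] (m₀ : MeasurableSpace Ω) (τ : ℕ → Ω → X)

theorem monotone_sup_biSup_comap :
    Monotone fun n => m₀ ⊔ ⨆ i ∈ Finset.Icc 1 n, mX.comap (τ i) := by
  intro a b hab
  refine sup_le_sup_left (biSup_mono fun i hi => ?_) _
  simp only [Finset.mem_Icc] at hi ⊢
  omega

theorem measurable_sup_biSup_comap_s11 {n : ℕ} (hn : 1 ≤ n) :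
    Measurable[m₀ ⊔ ⨆ i ∈ Finset.Icc 1 n, mX.comap (τ i)] (τ n) :=
  Measurable.of_comap_le <| le_sup_of_le_right <|
    le_biSup (fun i => mX.comap (τ i)) (Finset.mem_Icc.2 ⟨hn, le_rfl⟩)

end Filtration

def randomRecursion {Ω X E : Type*} (Φ : X × E → E) (ξ : ℕ → Ω → X) (x₀ : E) : ℕ → Ω → E
  | 0 => fun _ => x₀
  | n + 1 => fun ω => Φ (ξ (n + 1) ω, randomRecursion Φ ξ x₀ n ω)

theorem measurable_randomRecursion {Ω X E : Type*} [MeasurableSpace X] [MeasurableSpace E]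
    {𝓕 : ℕ → MeasurableSpace Ω} (h𝓕 : Monotone 𝓕) {ξ : ℕ → Ω → X}
    (hξ : ∀ n, Measurable[𝓕 (n + 1)] (ξ (n + 1))) {Φ : X × E → E} (hΦ : Measurable Φ) (x₀ : E) :
    ∀ n, Measurable[𝓕 n] (randomRecursion Φ ξ x₀ n)
  | 0 => measurable_const
  | n + 1 => hΦ.comp ((hξ n).prodMk
      ((measurable_randomRecursion h𝓕 hξ hΦ x₀ n).mono (h𝓕 n.le_succ) le_rfl))

theorem absolutelyContinuous_map_randomTime {Ω : Type*} [MeasurableSpace Ω] {P : Measure Ω}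
    {τ : Ω → ℝ} (hτ : Measurable τ) (hτ_unif : P.map τ = volume.restrict (Set.Icc 0 1))
    {n N : ℕ} (hn : 1 ≤ n) (hnN : n ≤ N) {k T : ℝ} (hk : 0 < k) (hNk : N * k = T) :
    P.map (fun ω => ((n : ℝ) - 1) * k + k * τ ω) ≪ volume.restrict (Set.Icc 0 T) := by
  have hn' : (1 : ℝ) ≤ n := by exact_mod_cast hn
  have hnN' : (n : ℝ) ≤ N := by exact_mod_cast hnN
  change P.map ((fun x => ((n : ℝ) - 1) * k + k * x) ∘ τ) ≪ _
  rw [← Measure.map_map (by fun_prop) hτ, hτ_unif]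
  exact absolutelyContinuous_map_affine_restrict_unitInterval hk (by nlinarith) (by nlinarith)

theorem solvesRBEGalerkin_randomRecursion {V H Ω : Type} [NormedAddCommGroup V]
    [InnerProductSpace ℝ V] [MeasurableSpace V] [NormedAddCommGroup H] [InnerProductSpace ℝ H]
    [MeasurableSpace Ω] {P : Measure Ω} {j : V →L[ℝ] H} {𝒜 : ℝ → V → StrongDual ℝ V}
    {f g : ℝ → H} {u₀ : H} {Vh : Submodule ℝ V} {N : ℕ} {k : ℝ} {𝓕 : ℕ → MeasurableSpace Ω}
    {ξ : ℕ → Ω → ℝ} {s : Set ℝ} {Φ : ℝ × Vh → Vh} (hΦ_meas : Measurable Φ)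
    (hΦ : ∀ t ∈ s, ∀ (p : Vh), ∀ w ∈ Vh,
      ⟪j (Φ (t, p)), j w⟫ + k * 𝒜 t (Φ (t, p)) w = k * ⟪g t, j w⟫ + ⟪j p, j w⟫)
    {v₀ : Vh} (hv₀ : ∀ w ∈ Vh, ⟪j v₀, j w⟫ = ⟪u₀, j w⟫) (h𝓕 : Monotone 𝓕)
    (hξ_meas : ∀ n, 1 ≤ n → Measurable[𝓕 n] (ξ n))
    (hξ : ∀ n, 1 ≤ n → n ≤ N → ∀ᵐ ω ∂P, ξ n ω ∈ s ∧ f (ξ n ω) = g (ξ n ω)) :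
    SolvesRBEGalerkin P j 𝒜 f u₀ Vh N k 𝓕 ξ
      fun n ω => ((randomRecursion Φ ξ v₀ n ω : Vh) : V) := by
  refine ⟨fun _ => ⟨v₀.2, hv₀⟩, fun n _ _ => measurable_subtype_coe.comp
    (measurable_randomRecursion h𝓕 (fun n => hξ_meas _ n.succ_pos) hΦ_meas v₀ n),
    fun n hn hnN => ?_⟩
  obtain ⟨n, rfl⟩ : ∃ m, n = m + 1 := ⟨n - 1, by omega⟩
  filter_upwards [hξ _ hn hnN] with ω ⟨hξs, hfg⟩
  refine ⟨(randomRecursion Φ ξ v₀ (n + 1) ω).2, fun w hw => ?_⟩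
  rw [hfg]
  exact hΦ _ hξs _ w hw

theorem stmt11_general
    (V H : Type) [NormedAddCommGroup V] [InnerProductSpace ℝ V]
    [MeasurableSpace V] [BorelSpace V]
    [NormedAddCommGroup H] [InnerProductSpace ℝ H]
    (j : V →L[ℝ] H) (hj_inj : Function.Injective j)
    (T : ℝ) (hT : 0 < T)
    (𝒜 : ℝ → V → StrongDual ℝ V)
    (hA_meas : ∀ v₁ v₂ : V, Measurable fun t => 𝒜 t v₁ v₂)
    (L : ℝ) (hL : 0 < L)
    (hA_lip : ∀ t ∈ Set.Icc (0:ℝ) T, ∀ v₁ v₂ : V,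
      ‖𝒜 t v₁ - 𝒜 t v₂‖ ≤ L * ‖v₁ - v₂‖)
    (μ : ℝ) (hμ : 0 < μ)
    (hA_mono : ∀ t ∈ Set.Icc (0:ℝ) T, ∀ v₁ v₂ : V,
      μ * ‖v₁ - v₂‖ ^ 2 ≤ (𝒜 t v₁ - 𝒜 t v₂) (v₁ - v₂))
    (f : ℝ → H) (hf : MemLp f 2 (volume.restrict (Set.Icc (0:ℝ) T)))
    (u₀ : H)
    (Vh : Submodule ℝ V) [FiniteDimensional ℝ Vh]
    -- the randomized temporal setting
    (N : ℕ) (hN : 0 < N) (k : ℝ) (hk : k = T / N)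
    (Ω : Type) [mΩ : MeasurableSpace Ω] (P : Measure Ω)
    (τ : ℕ → Ω → ℝ) (hτ_meas : ∀ n, Measurable (τ n))
    (hτ_unif : ∀ n, 1 ≤ n → n ≤ N →
      Measure.map (τ n) P = volume.restrict (Set.Icc (0:ℝ) 1))
    (ξ : ℕ → Ω → ℝ) (hξ : ∀ n ω, ξ n ω = ((n : ℝ) - 1) * k + k * τ n ω)
    (𝓕 : ℕ → MeasurableSpace Ω)
    (h𝓕 : ∀ n, 𝓕 n = MeasurableSpace.generateFrom {s : Set Ω | P s = 0} ⊔
      ⨆ i ∈ Finset.Icc 1 n, MeasurableSpace.comap (τ i)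
        (inferInstance : MeasurableSpace ℝ)) :
    ∃ U : ℕ → Ω → V, SolvesRBEGalerkin P j 𝒜 f u₀ Vh N k 𝓕 ξ U ∧
      ∀ U' : ℕ → Ω → V, SolvesRBEGalerkin P j 𝒜 f u₀ Vh N k 𝓕 ξ U' →
        ∀ n ≤ N, U' n =ᵐ[P] U n := by
  have hk_pos : 0 < k := hk ▸ div_pos hT (Nat.cast_pos.2 hN)
  have hf_meas := hf.aestronglyMeasurable
  obtain ⟨Φ, hΦ_meas, hΦ⟩ := exists_measurable_galerkinStep j Vh hT.le hA_meas hL.le hA_lip hμ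
    hA_mono hk_pos hf_meas.stronglyMeasurable_mk
  obtain ⟨v₀, hv₀, hv₀_eq⟩ := exists_galerkin_projection j Vh u₀
  have hξ_eq : ∀ n, ξ n = fun ω => ((n : ℝ) - 1) * k + k * τ n ω := fun n => funext (hξ n)
  have hξ_meas : ∀ n, 1 ≤ n → Measurable[𝓕 n] (ξ n) := fun n hn => by
    rw [hξ_eq, h𝓕]
    exact measurable_const.add ((measurable_sup_biSup_comap_s11 _ τ hn).const_mul k)
  have hξ_ae : ∀ n, 1 ≤ n → n ≤ N →
      ∀ᵐ ω ∂P, ξ n ω ∈ Set.Icc 0 T ∧ f (ξ n ω) = hf_meas.mk f (ξ n ω) := fun n hn hnN => by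
    have hlaw := absolutelyContinuous_map_randomTime (hτ_meas n) (hτ_unif n hn hnN) hn hnN
      hk_pos (T := T) (by rw [hk]; field_simp)
    rw [← hξ_eq] at hlaw
    exact ae_of_ae_map (by rw [hξ_eq]; fun_prop)
      (hlaw.ae_le ((ae_restrict_mem measurableSet_Icc).and hf_meas.ae_eq_mk))
  have hsol := solvesRBEGalerkin_randomRecursion hΦ_meas hΦ (v₀ := ⟨v₀, hv₀⟩) hv₀_eq
    (funext h𝓕 ▸ monotone_sup_biSup_comap _ τ) hξ_meas hξ_ae
  exact ⟨_, hsol, fun U' hU' => hsol.ae_eq hU' hj_inj hk_pos hμ hA_mono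
    fun n hn hnN => (hξ_ae n hn hnN).mono fun _ h => h.1⟩

/-- Under Assumption B, for every `f ∈ L²(0,T;H)`,
`u₀ ∈ H`, every finite-dimensional subspace `V_h ⊆ V` and every step size
`k = T/N`, the fully discrete randomized backward Euler–Galerkin scheme has a
unique solution `(U_h^n)_{n=0,…,N}` (uniqueness holding almost surely). -/
theorem stmt11
    (V H : Type) [NormedAddCommGroup V] [InnerProductSpace ℝ V] [CompleteSpace V]
    [SecondCountableTopology V] [MeasurableSpace V] [BorelSpace V]
    [NormedAddCommGroup H] [InnerProductSpace ℝ H] [CompleteSpace H]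
    [SecondCountableTopology H]
    (j : V →L[ℝ] H) (hj_inj : Function.Injective j) (hj_dense : DenseRange j)
    (T : ℝ) (hT : 0 < T)
    (𝒜 : ℝ → V → StrongDual ℝ V)
    (hA_meas : ∀ v₁ v₂ : V, Measurable fun t => 𝒜 t v₁ v₂)
    (M : ℝ) (hM : 0 ≤ M) (hA_bdd : ∀ t ∈ Set.Icc (0:ℝ) T, ‖𝒜 t 0‖ ≤ M)
    (L : ℝ) (hL : 0 < L)
    (hA_lip : ∀ t ∈ Set.Icc (0:ℝ) T, ∀ v₁ v₂ : V,
      ‖𝒜 t v₁ - 𝒜 t v₂‖ ≤ L * ‖v₁ - v₂‖)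
    (μ : ℝ) (hμ : 0 < μ)
    (hA_mono : ∀ t ∈ Set.Icc (0:ℝ) T, ∀ v₁ v₂ : V,
      μ * ‖v₁ - v₂‖ ^ 2 ≤ (𝒜 t v₁ - 𝒜 t v₂) (v₁ - v₂))
    (f : ℝ → H) (hf : MemLp f 2 (volume.restrict (Set.Icc (0:ℝ) T)))
    (u₀ : H)
    (Vh : Submodule ℝ V) [FiniteDimensional ℝ Vh]
    -- the randomized temporal setting
    (N : ℕ) (hN : 0 < N) (k : ℝ) (hk : k = T / N)
    (Ω : Type) [mΩ : MeasurableSpace Ω] (P : Measure Ω) [IsProbabilityMeasure P]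
    (hP_complete : ∀ s : Set Ω, P s = 0 → MeasurableSet s)
    (τ : ℕ → Ω → ℝ) (hτ_meas : ∀ n, Measurable (τ n))
    (hτ_indep : ProbabilityTheory.iIndepFun
      (m := fun _ : Fin N => (inferInstance : MeasurableSpace ℝ))
      (fun i : Fin N => τ (i + 1)) P)
    (hτ_unif : ∀ n, 1 ≤ n → n ≤ N →
      Measure.map (τ n) P = volume.restrict (Set.Icc (0:ℝ) 1))
    (ξ : ℕ → Ω → ℝ) (hξ : ∀ n ω, ξ n ω = ((n : ℝ) - 1) * k + k * τ n ω)
    (𝓕 : ℕ → MeasurableSpace Ω)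
    (h𝓕 : ∀ n, 𝓕 n = MeasurableSpace.generateFrom {s : Set Ω | P s = 0} ⊔
      ⨆ i ∈ Finset.Icc 1 n, MeasurableSpace.comap (τ i)
        (inferInstance : MeasurableSpace ℝ)) :
    ∃ U : ℕ → Ω → V, SolvesRBEGalerkin P j 𝒜 f u₀ Vh N k 𝓕 ξ U ∧
      ∀ U' : ℕ → Ω → V, SolvesRBEGalerkin P j 𝒜 f u₀ Vh N k 𝓕 ξ U' →
        ∀ n ≤ N, U' n =ᵐ[P] U n :=
  stmt11_general V H j hj_inj T hT 𝒜 hA_meas L hL hA_lip μ hμ hA_mono f hf u₀ Vh N hN k hk Ω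
    (mΩ := mΩ) P τ hτ_meas hτ_unif ξ hξ 𝓕 h𝓕
end

section
/- Let 𝒜 satisfy Assumption B, let f ∈ L²(0,T;H), let V_h ⊆ V be a finite-dimensional subspace, let U_h^0 ∈ V_h, and let N ∈ ℕ with k = T/N. Let (U_h^n)_{n=0,…,N} be the unique solution of the fully discrete scheme: P-almost surely, for every n ∈ {1,…,N} and all w ∈ V_h, (j U_h^n, j w)_H + k ⟨𝒜(ξ_n) U_h^n, w⟩ = k (f(ξ_n), j w)_H + (j U_h^{n−1}, j w)_H. Then there exists a constant C ∈ (0,∞), depending only on M, μ and the norm of the embedding j : V → H, such that max_{n ∈ {0,…,N}} E[ ‖j U_h^n‖²_H ] + Σ_{m=1}^{N} E[ ‖j U_h^m − j U_h^{m−1}‖²_H ] + k μ Σ_{m=1}^{N} E[ ‖U_h^m‖²_V ] ≤ C ( T + ‖j U_h^0‖²_H + ∫₀ᵀ ‖f(t)‖²_H dt ). -/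
/-!
Testing the scheme with `w = Uⁿ` and using `2⟪a, b⟫ = ‖a‖² + ‖b‖² - ‖a - b‖²` gives the
pathwise energy inequality
`‖j Uⁿ‖² + ‖j Uⁿ - j Uⁿ⁻¹‖² + kμ‖Uⁿ‖² ≤ ‖j Uⁿ⁻¹‖² + (2k/μ)(M² + ‖j‖²‖f(ξₙ)‖²)`,
where strong monotonicity against `v₂ = 0` and `‖𝒜(t)0‖ ≤ M` bound `⟨𝒜(t)u, u⟩` from below and
Young's inequality absorbs the linear terms. Since `ξₙ` is uniform on `[tₙ₋₁, tₙ]`,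
`E‖f(ξₙ)‖² = k⁻¹ ∫_{tₙ₋₁}^{tₙ} ‖f‖²`, so taking expectations and telescoping over `n` bounds
each of the three terms by `‖j U⁰‖² + (2/μ)(T M² + ‖j‖² ∫₀ᵀ ‖f‖²)`.
-/

open MeasureTheory RealInnerProductSpace

theorem Icc_mul_add_subset_Icc_zero_mul {k : ℝ} (hk : 0 ≤ k) {n N : ℕ} (hn : n < N) :
    Set.Icc (n * k) (n * k + k) ⊆ Set.Icc 0 (N * k) := by
  refine Set.Icc_subset_Icc (by positivity) ?_
  rw [← add_one_mul]
  exact mul_le_mul_of_nonneg_right (by exact_mod_cast hn) hk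

theorem sum_integral_Icc_add_eq_integral_Icc {E : Type*} [NormedAddCommGroup E] [NormedSpace ℝ E]
    {g : ℝ → E} {k : ℝ} (hk : 0 ≤ k) (N : ℕ) (hg : IntegrableOn g (Set.Icc 0 (N * k))) :
    ∑ n ∈ Finset.range N, ∫ t in Set.Icc (n * k) (n * k + k), g t
      = ∫ t in Set.Icc 0 (N * k), g t := by
  have hsum := intervalIntegral.sum_integral_adjacent_intervals (a := fun n : ℕ => n * k) (n := N)
    fun n hn => (hg.mono_set (by
      simpa only [Nat.cast_succ, add_one_mul, Set.uIcc_of_le (le_add_of_nonneg_right hk)]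
        using Icc_mul_add_subset_Icc_zero_mul hk hn)).intervalIntegrable
  simp only [Nat.cast_succ, add_one_mul, Nat.cast_zero, zero_mul] at hsum
  rw [integral_Icc_eq_integral_Ioc, ← intervalIntegral.integral_of_le (by positivity), ← hsum]
  refine Finset.sum_congr rfl fun n _ => ?_
  rw [integral_Icc_eq_integral_Ioc, intervalIntegral.integral_of_le (by linarith)]

theorem map_affine_volume_restrict_unitInterval {c k : ℝ} (hk : 0 < k) :
    (volume.restrict (Set.Icc (0 : ℝ) 1)).map (fun t => c + k * t)
      = (ENNReal.ofReal k)⁻¹ • volume.restrict (Set.Icc c (c + k)) := by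
  have hemb : MeasurableEmbedding fun t : ℝ => c + k * t :=
    ((Homeomorph.mulLeft₀ k hk.ne').trans (Homeomorph.addLeft c)).measurableEmbedding
  have hmap : volume.map (fun t : ℝ => c + k * t) = (ENNReal.ofReal k)⁻¹ • volume := by
    rw [show (fun t : ℝ => c + k * t) = (c + ·) ∘ (k * ·) from rfl,
      ← Measure.map_map (measurable_const_add c) (measurable_const_mul k),
      Real.map_volume_mul_left hk.ne', Measure.map_smul,
      (measurePreserving_add_left volume c).map_eq, abs_of_pos (inv_pos.mpr hk),
      ENNReal.ofReal_inv_of_pos hk]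
  have hpre : (fun t : ℝ => c + k * t) ⁻¹' Set.Icc c (c + k) = Set.Icc 0 1 := by
    ext t
    simp only [Set.mem_preimage, Set.mem_Icc]
    constructor <;> rintro ⟨h1, h2⟩ <;> constructor <;> nlinarith
  rw [← hpre, ← hemb.restrict_map, hmap, Measure.restrict_smul]

section UniformTime

variable {Ω E : Type*} [MeasurableSpace Ω] {P : Measure Ω} {θ : Ω → ℝ}
  [NormedAddCommGroup E] {c k : ℝ}

theorem map_affine_of_map_eq_unitInterval (hθ : Measurable θ)
    (hlaw : P.map θ = volume.restrict (Set.Icc 0 1)) (hk : 0 < k) :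
    P.map (fun ω => c + k * θ ω)
      = (ENNReal.ofReal k)⁻¹ • volume.restrict (Set.Icc c (c + k)) := by
  rw [← map_affine_volume_restrict_unitInterval hk, ← hlaw,
    Measure.map_map ((measurable_const_mul k).const_add c) hθ]
  rfl

theorem integrable_comp_affine_of_map_eq_unitInterval (hθ : Measurable θ)
    (hlaw : P.map θ = volume.restrict (Set.Icc 0 1)) (hk : 0 < k) {g : ℝ → E}
    (hg : IntegrableOn g (Set.Icc c (c + k))) :
    Integrable (fun ω => g (c + k * θ ω)) P := by
  have hmeas : AEMeasurable (fun ω => c + k * θ ω) P := ((hθ.const_mul k).const_add c).aemeasurable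
  have hg' : Integrable g (P.map fun ω => c + k * θ ω) := by
    rw [map_affine_of_map_eq_unitInterval hθ hlaw hk]
    exact hg.smul_measure (by simp [hk])
  exact (integrable_map_measure hg'.aestronglyMeasurable hmeas).mp hg'

theorem integral_comp_affine_of_map_eq_unitInterval [NormedSpace ℝ E] (hθ : Measurable θ)
    (hlaw : P.map θ = volume.restrict (Set.Icc 0 1)) (hk : 0 < k) {g : ℝ → E}
    (hg : IntegrableOn g (Set.Icc c (c + k))) :
    ∫ ω, g (c + k * θ ω) ∂P = k⁻¹ • ∫ t in Set.Icc c (c + k), g t := by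
  have hmap := map_affine_of_map_eq_unitInterval hθ hlaw hk (c := c)
  have hsm : AEStronglyMeasurable g (P.map fun ω => c + k * θ ω) := by
    rw [hmap]
    exact hg.aestronglyMeasurable.mono_ac Measure.smul_absolutelyContinuous
  rw [← integral_map ((hθ.const_mul k).const_add c).aemeasurable hsm, hmap,
    integral_smul_measure, ENNReal.toReal_inv, ENNReal.toReal_ofReal hk.le]

theorem ae_mem_Icc_of_map_eq_unitInterval (hθ : Measurable θ)
    (hlaw : P.map θ = volume.restrict (Set.Icc 0 1)) (hk : 0 ≤ k) :
    ∀ᵐ ω ∂P, c + k * θ ω ∈ Set.Icc c (c + k) := by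
  have h : ∀ᵐ ω ∂P, θ ω ∈ Set.Icc (0 : ℝ) 1 := by
    refine (ae_map_iff hθ.aemeasurable measurableSet_Icc).mp ?_
    rw [hlaw]
    exact ae_restrict_mem measurableSet_Icc
  filter_upwards [h] with ω ⟨h0, h1⟩
  constructor <;> nlinarith

end UniformTime

theorem two_mul_le_weighted_add_sq {μ : ℝ} (hμ : 0 < μ) (a b : ℝ) :
    2 * a * b ≤ μ / 2 * b ^ 2 + 2 / μ * a ^ 2 := by
  have h : μ / 2 * b ^ 2 + 2 / μ * a ^ 2 - 2 * a * b = (μ * b - 2 * a) ^ 2 / (2 * μ) := by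
    field_simp
    ring
  rw [← sub_nonneg, h]
  positivity

section Energy

variable {V H : Type*} [NormedAddCommGroup V] [NormedSpace ℝ V]
  [NormedAddCommGroup H] [InnerProductSpace ℝ H]

theorem sub_le_apply_self_of_strongly_monotone {A : V → StrongDual ℝ V} {M μ : ℝ}
    (hA0 : ‖A 0‖ ≤ M) (hmono : ∀ v₁ v₂, μ * ‖v₁ - v₂‖ ^ 2 ≤ (A v₁ - A v₂) (v₁ - v₂)) (u : V) :
    μ * ‖u‖ ^ 2 - M * ‖u‖ ≤ A u u := by
  have hcoer : μ * ‖u‖ ^ 2 ≤ A u u - A 0 u := by simpa using hmono u 0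
  have hA0u : |A 0 u| ≤ M * ‖u‖ :=
    ((A 0).le_opNorm u).trans (mul_le_mul_of_nonneg_right hA0 (norm_nonneg u))
  linarith [neg_abs_le (A 0 u)]

theorem energy_step (j : V →L[ℝ] H) {A : V → StrongDual ℝ V} {M μ k : ℝ} (hμ : 0 < μ)
    (hk : 0 ≤ k) (hA0 : ‖A 0‖ ≤ M)
    (hmono : ∀ v₁ v₂, μ * ‖v₁ - v₂‖ ^ 2 ≤ (A v₁ - A v₂) (v₁ - v₂)) {u v : V} {g : H}
    (h : ⟪j u, j u⟫ + k * A u u = k * ⟪g, j u⟫ + ⟪j v, j u⟫) :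
    ‖j u‖ ^ 2 + ‖j u - j v‖ ^ 2 + k * μ * ‖u‖ ^ 2
      ≤ ‖j v‖ ^ 2 + 2 / μ * (k * M ^ 2 + ‖j‖ ^ 2 * (k * ‖g‖ ^ 2)) := by
  have hpolar := norm_sub_sq_real (j u) (j v)
  rw [real_inner_self_eq_norm_sq, real_inner_comm (j u) (j v)] at h
  have hcoer := mul_le_mul_of_nonneg_left (sub_le_apply_self_of_strongly_monotone hA0 hmono u) hk
  have hg : ⟪g, j u⟫ ≤ ‖j‖ * ‖g‖ * ‖u‖ := by
    calc ⟪g, j u⟫ ≤ ‖g‖ * ‖j u‖ := real_inner_le_norm _ _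
      _ ≤ ‖g‖ * (‖j‖ * ‖u‖) := by gcongr; exact j.le_opNorm u
      _ = ‖j‖ * ‖g‖ * ‖u‖ := by ring
  have hyoung₁ := mul_le_mul_of_nonneg_left (two_mul_le_weighted_add_sq hμ (‖j‖ * ‖g‖) ‖u‖) hk
  have hyoung₂ := mul_le_mul_of_nonneg_left (two_mul_le_weighted_add_sq hμ M ‖u‖) hk
  linarith [mul_le_mul_of_nonneg_left hg hk]

end Energy

theorem three_mul_add_le {μ T x F M J : ℝ} (hμ : 0 < μ) (hT : 0 ≤ T) (hx : 0 ≤ x) (hF : 0 ≤ F) :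
    3 * (x + 2 / μ * (T * M ^ 2 + J ^ 2 * F))
      ≤ (3 + 6 * M ^ 2 / μ + 6 * J ^ 2 / μ) * (T + x + F) := by
  rw [← sub_nonneg]
  have hdiff : (3 + 6 * M ^ 2 / μ + 6 * J ^ 2 / μ) * (T + x + F)
      - 3 * (x + 2 / μ * (T * M ^ 2 + J ^ 2 * F))
      = 3 * (T + F) + 6 * M ^ 2 / μ * (x + F) + 6 * J ^ 2 / μ * (T + x) := by
    ring
  rw [hdiff]
  positivity

open Finset in
theorem iSup_add_sum_add_mul_sum_le_of_step {a b c d : ℕ → ℝ} {K : ℝ} {N : ℕ}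
    (ha : ∀ n, 0 ≤ a n) (hb : ∀ n, 0 ≤ b n) (hc : ∀ n, 0 ≤ c n) (hd : ∀ n, 0 ≤ d n) (hK : 0 ≤ K)
    (step : ∀ n < N, a (n + 1) + b (n + 1) + K * c (n + 1) ≤ a n + d n) :
    (⨆ n ∈ Icc 0 N, a n) + ∑ m ∈ Icc 1 N, b m + K * ∑ m ∈ Icc 1 N, c m
      ≤ 3 * (a 0 + ∑ n ∈ range N, d n) := by
  have htel : ∀ m ≤ N, a m + ∑ i ∈ Icc 1 m, b i + K * ∑ i ∈ Icc 1 m, c i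
      ≤ a 0 + ∑ i ∈ range m, d i := by
    intro m
    induction m with
    | zero => simp
    | succ m ih =>
      intro hm
      rw [sum_Icc_succ_top (by omega), sum_Icc_succ_top (by omega), sum_range_succ]
      linarith [ih (by omega), step m hm]
  have hsum_b := sum_nonneg fun i (_ : i ∈ Icc 1 N) => hb i
  have hsum_c := mul_nonneg hK (sum_nonneg fun i (_ : i ∈ Icc 1 N) => hc i)
  have hbound : ∀ m ≤ N, a m ≤ a 0 + ∑ n ∈ range N, d n := fun m hm => by
    have hd_mono := sum_le_sum_of_subset_of_nonneg (range_subset_range.mpr hm)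
      fun i _ _ => hd i
    linarith [htel m hm, sum_nonneg fun i (_ : i ∈ Icc 1 m) => hb i,
      mul_nonneg hK (sum_nonneg fun i (_ : i ∈ Icc 1 m) => hc i)]
  have hsup : (⨆ n ∈ Icc 0 N, a n) ≤ a 0 + ∑ n ∈ range N, d n :=
    Real.iSup_le (fun n => Real.iSup_le (fun hn => hbound n (mem_Icc.mp hn).2)
      ((ha 0).trans (hbound 0 N.zero_le))) ((ha 0).trans (hbound 0 N.zero_le))
  linarith [htel N le_rfl, ha N]

section ExpectedEnergy

variable {V H Ω : Type*} [NormedAddCommGroup V] [NormedSpace ℝ V]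
  [NormedAddCommGroup H] [InnerProductSpace ℝ H] [MeasurableSpace Ω]

theorem integral_energy_step (j : V →L[ℝ] H) {𝒜 : ℝ → V → StrongDual ℝ V} {M μ c k : ℝ}
    (hμ : 0 < μ) (hk : 0 < k) (hA0 : ∀ t ∈ Set.Icc c (c + k), ‖𝒜 t 0‖ ≤ M)
    (hmono : ∀ t ∈ Set.Icc c (c + k), ∀ v₁ v₂,
      μ * ‖v₁ - v₂‖ ^ 2 ≤ (𝒜 t v₁ - 𝒜 t v₂) (v₁ - v₂))
    {f : ℝ → H} (hf : IntegrableOn (fun t => ‖f t‖ ^ 2) (Set.Icc c (c + k)))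
    {P : Measure Ω} [IsProbabilityMeasure P] {θ : Ω → ℝ} (hθ : Measurable θ)
    (hlaw : P.map θ = volume.restrict (Set.Icc 0 1)) {X Y : Ω → V}
    (hX : MemLp X 2 P) (hY : MemLp Y 2 P)
    (hscheme : ∀ᵐ ω ∂P, ⟪j (Y ω), j (Y ω)⟫ + k * 𝒜 (c + k * θ ω) (Y ω) (Y ω)
      = k * ⟪f (c + k * θ ω), j (Y ω)⟫ + ⟪j (X ω), j (Y ω)⟫) :
    ∫ ω, ‖j (Y ω)‖ ^ 2 ∂P + ∫ ω, ‖j (Y ω) - j (X ω)‖ ^ 2 ∂P + k * μ * ∫ ω, ‖Y ω‖ ^ 2 ∂P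
      ≤ ∫ ω, ‖j (X ω)‖ ^ 2 ∂P
        + 2 / μ * (k * M ^ 2 + ‖j‖ ^ 2 * ∫ t in Set.Icc c (c + k), ‖f t‖ ^ 2) := by
  have hjX : Integrable (fun ω => ‖j (X ω)‖ ^ 2) P :=
    MemLp.integrable_norm_pow (j.comp_memLp' hX) two_ne_zero
  have hjY : Integrable (fun ω => ‖j (Y ω)‖ ^ 2) P :=
    MemLp.integrable_norm_pow (j.comp_memLp' hY) two_ne_zero
  have hjYX : Integrable (fun ω => ‖j (Y ω) - j (X ω)‖ ^ 2) P :=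
    MemLp.integrable_norm_pow ((j.comp_memLp' hY).sub (j.comp_memLp' hX)) two_ne_zero
  have hY2 := hY.integrable_norm_pow two_ne_zero
  have hfθ : Integrable (fun ω => ‖j‖ ^ 2 * (k * ‖f (c + k * θ ω)‖ ^ 2)) P :=
    ((integrable_comp_affine_of_map_eq_unitInterval hθ hlaw hk hf).const_mul k).const_mul _
  have hjYYX : Integrable (fun ω => ‖j (Y ω)‖ ^ 2 + ‖j (Y ω) - j (X ω)‖ ^ 2) P := hjY.add hjYX
  have hforce : Integrable (fun ω => k * M ^ 2 + ‖j‖ ^ 2 * (k * ‖f (c + k * θ ω)‖ ^ 2)) P :=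
    (integrable_const _).add hfθ
  have hpt : ∀ᵐ ω ∂P,
      ‖j (Y ω)‖ ^ 2 + ‖j (Y ω) - j (X ω)‖ ^ 2 + k * μ * ‖Y ω‖ ^ 2
        ≤ ‖j (X ω)‖ ^ 2 + 2 / μ * (k * M ^ 2 + ‖j‖ ^ 2 * (k * ‖f (c + k * θ ω)‖ ^ 2)) := by
    filter_upwards [hscheme, ae_mem_Icc_of_map_eq_unitInterval hθ hlaw hk.le] with ω h ht
    exact energy_step j hμ hk.le (hA0 _ ht) (hmono _ ht) h
  have hint := integral_mono_ae (hjYYX.add (hY2.const_mul (k * μ)))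
    (hjX.add (hforce.const_mul (2 / μ))) hpt
  simp only [Pi.add_apply] at hint
  rw [integral_add hjYYX (hY2.const_mul _), integral_add hjY hjYX,
    integral_add hjX (hforce.const_mul _), integral_const_mul, integral_const_mul,
    integral_add (integrable_const _) hfθ, integral_const, integral_const_mul, integral_const_mul,
    integral_comp_affine_of_map_eq_unitInterval hθ hlaw hk hf] at hint
  simpa [hk.ne'] using hint

end ExpectedEnergy

theorem stmt12_general
    (V H : Type) [NormedAddCommGroup V] [InnerProductSpace ℝ V] [MeasurableSpace V]
    [NormedAddCommGroup H] [InnerProductSpace ℝ H]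
    (j : V →L[ℝ] H) (M : ℝ) (μ : ℝ) (hμ : 0 < μ) :
    ∃ C : ℝ, 0 < C ∧
      ∀ (T : ℝ), 0 < T →
      ∀ 𝒜 : ℝ → V → StrongDual ℝ V,
        (∀ v₁ v₂ : V, Measurable fun t => 𝒜 t v₁ v₂) →
        (∀ t ∈ Set.Icc (0:ℝ) T, ‖𝒜 t 0‖ ≤ M) →
        (∃ L : ℝ, 0 < L ∧ ∀ t ∈ Set.Icc (0:ℝ) T, ∀ v₁ v₂ : V,
          ‖𝒜 t v₁ - 𝒜 t v₂‖ ≤ L * ‖v₁ - v₂‖) →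
        (∀ t ∈ Set.Icc (0:ℝ) T, ∀ v₁ v₂ : V,
          μ * ‖v₁ - v₂‖ ^ 2 ≤ (𝒜 t v₁ - 𝒜 t v₂) (v₁ - v₂)) →
      ∀ f : ℝ → H, MemLp f 2 (volume.restrict (Set.Icc (0:ℝ) T)) →
      ∀ Vh : Submodule ℝ V, FiniteDimensional ℝ Vh →
      ∀ U0 : V, U0 ∈ Vh →
      ∀ (N : ℕ), 0 < N → ∀ (k : ℝ), k = T / N →
      ∀ (Ω : Type) [mΩ : MeasurableSpace Ω] (P : Measure Ω)
        [IsProbabilityMeasure P],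
        (∀ s : Set Ω, P s = 0 → MeasurableSet s) →
      ∀ τ : ℕ → Ω → ℝ, (∀ n, Measurable (τ n)) →
        ProbabilityTheory.iIndepFun
          (fun i : Fin N => τ (i + 1)) P →
        (∀ n, 1 ≤ n → n ≤ N →
          Measure.map (τ n) P = volume.restrict (Set.Icc (0:ℝ) 1)) →
      ∀ ξ : ℕ → Ω → ℝ, (∀ n ω, ξ n ω = ((n : ℝ) - 1) * k + k * τ n ω) →
      ∀ 𝓕 : ℕ → MeasurableSpace Ω,
        (∀ n, 𝓕 n = MeasurableSpace.generateFrom {s : Set Ω | P s = 0} ⊔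
          ⨆ i ∈ Finset.Icc 1 n, MeasurableSpace.comap (τ i)
            (inferInstance : MeasurableSpace ℝ)) →
      -- the unique solution of the fully discrete scheme
      ∀ U : ℕ → Ω → V,
        (∀ ω, U 0 ω = U0) →
        (∀ n, 1 ≤ n → n ≤ N → Measurable[𝓕 n] (U n) ∧ MemLp (U n) 2 P) →
        (∀ n, 1 ≤ n → n ≤ N → ∀ᵐ ω ∂P, U n ω ∈ Vh ∧
          ∀ w ∈ Vh, ⟪j (U n ω), j w⟫ + k * 𝒜 (ξ n ω) (U n ω) w
            = k * ⟪f (ξ n ω), j w⟫ + ⟪j (U (n - 1) ω), j w⟫) →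
      (⨆ n ∈ Finset.Icc 0 N, ∫ ω, ‖j (U n ω)‖ ^ 2 ∂P) +
        (∑ m ∈ Finset.Icc 1 N, ∫ ω, ‖j (U m ω) - j (U (m - 1) ω)‖ ^ 2 ∂P) +
        k * μ * ∑ m ∈ Finset.Icc 1 N, ∫ ω, ‖U m ω‖ ^ 2 ∂P ≤
      C * (T + ‖j U0‖ ^ 2 + ∫ t in Set.Icc (0:ℝ) T, ‖f t‖ ^ 2) := by
  refine ⟨3 + 6 * M ^ 2 / μ + 6 * ‖j‖ ^ 2 / μ, by positivity, ?_⟩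
  intro T hT 𝒜 _ hA0 _ hmono f hf Vh _ U0 _ N hN k hk Ω _ P _ _ τ hτ _ hlaw ξ hξ 𝓕 _ U hU0 hU
    hscheme
  have hk0 : 0 < k := by rw [hk]; positivity
  have hNk : (N : ℝ) * k = T := by rw [hk]; field_simp
  rw [← hNk] at hA0 hmono hf
  have hf2 : IntegrableOn (fun t => ‖f t‖ ^ 2) (Set.Icc 0 (N * k)) :=
    hf.integrable_norm_pow two_ne_zero
  have hmem : ∀ n ≤ N, MemLp (U n) 2 P := by
    rintro (_ | n) hn
    · simpa [funext hU0] using memLp_const (μ := P) U0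
    · exact (hU (n + 1) (by omega) hn).2
  refine le_trans (iSup_add_sum_add_mul_sum_le_of_step (d := fun n => 2 / μ *
      (k * M ^ 2 + ‖j‖ ^ 2 * ∫ t in Set.Icc (n * k) (n * k + k), ‖f t‖ ^ 2))
    (fun _ => integral_nonneg fun _ => by positivity)
    (fun _ => integral_nonneg fun _ => by positivity)
    (fun _ => integral_nonneg fun _ => by positivity) (fun _ => by positivity) (by positivity)
    fun n hn => ?_) ?_
  · have hsub := Icc_mul_add_subset_Icc_zero_mul hk0.le hn
    have hξn : ∀ ω, ξ (n + 1) ω = n * k + k * τ (n + 1) ω := fun ω => by rw [hξ]; push_cast; ring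
    rw [Nat.add_sub_cancel]
    refine integral_energy_step j hμ hk0 (fun t ht => hA0 t (hsub ht))
      (fun t ht => hmono t (hsub ht)) (hf2.mono_set hsub) (hτ _) (hlaw _ (by omega) hn)
      (hmem n hn.le) (hmem (n + 1) hn) ?_
    filter_upwards [hscheme (n + 1) (by omega) hn] with ω ⟨hUmem, heq⟩
    simpa only [hξn, Nat.add_sub_cancel] using heq _ hUmem
  · rw [← Finset.mul_sum, Finset.sum_add_distrib, Finset.sum_const, Finset.card_range,
      nsmul_eq_mul, ← mul_assoc, ← Finset.mul_sum,
      sum_integral_Icc_add_eq_integral_Icc hk0.le N hf2, hNk]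
    simp only [hU0, integral_const, probReal_univ, one_smul]
    exact three_mul_add_le hμ hT.le (by positivity) (integral_nonneg fun _ => by positivity)

/-- A priori bound for the fully discrete randomized backward
Euler–Galerkin scheme: there is a constant `C > 0`, depending only on `M`, `μ`
and the embedding `j : V → H`, such that for every choice of the remaining data
the scheme's solution satisfies
`max_n E‖j Uⁿ‖²_H + Σₘ E‖j Uᵐ − j Uᵐ⁻¹‖²_H + kμ Σₘ E‖Uᵐ‖²_V
  ≤ C (T + ‖j U⁰‖²_H + ∫₀ᵀ ‖f‖²_H)`. -/
theorem stmt12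
    (V H : Type) [NormedAddCommGroup V] [InnerProductSpace ℝ V] [CompleteSpace V]
    [SecondCountableTopology V] [MeasurableSpace V] [BorelSpace V]
    [NormedAddCommGroup H] [InnerProductSpace ℝ H] [CompleteSpace H]
    [SecondCountableTopology H]
    (j : V →L[ℝ] H) (hj_inj : Function.Injective j) (hj_dense : DenseRange j)
    (M : ℝ) (hM : 0 ≤ M) (μ : ℝ) (hμ : 0 < μ) :
    ∃ C : ℝ, 0 < C ∧
      ∀ (T : ℝ), 0 < T →
      ∀ 𝒜 : ℝ → V → StrongDual ℝ V,
        (∀ v₁ v₂ : V, Measurable fun t => 𝒜 t v₁ v₂) →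
        (∀ t ∈ Set.Icc (0:ℝ) T, ‖𝒜 t 0‖ ≤ M) →
        (∃ L : ℝ, 0 < L ∧ ∀ t ∈ Set.Icc (0:ℝ) T, ∀ v₁ v₂ : V,
          ‖𝒜 t v₁ - 𝒜 t v₂‖ ≤ L * ‖v₁ - v₂‖) →
        (∀ t ∈ Set.Icc (0:ℝ) T, ∀ v₁ v₂ : V,
          μ * ‖v₁ - v₂‖ ^ 2 ≤ (𝒜 t v₁ - 𝒜 t v₂) (v₁ - v₂)) →
      ∀ f : ℝ → H, MemLp f 2 (volume.restrict (Set.Icc (0:ℝ) T)) →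
      ∀ Vh : Submodule ℝ V, FiniteDimensional ℝ Vh →
      ∀ U0 : V, U0 ∈ Vh →
      ∀ (N : ℕ), 0 < N → ∀ (k : ℝ), k = T / N →
      ∀ (Ω : Type) [mΩ : MeasurableSpace Ω] (P : Measure Ω)
        [IsProbabilityMeasure P],
        (∀ s : Set Ω, P s = 0 → MeasurableSet s) →
      ∀ τ : ℕ → Ω → ℝ, (∀ n, Measurable (τ n)) →
        ProbabilityTheory.iIndepFun
          (fun i : Fin N => τ (i + 1)) P →
        (∀ n, 1 ≤ n → n ≤ N →
          Measure.map (τ n) P = volume.restrict (Set.Icc (0:ℝ) 1)) →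
      ∀ ξ : ℕ → Ω → ℝ, (∀ n ω, ξ n ω = ((n : ℝ) - 1) * k + k * τ n ω) →
      ∀ 𝓕 : ℕ → MeasurableSpace Ω,
        (∀ n, 𝓕 n = MeasurableSpace.generateFrom {s : Set Ω | P s = 0} ⊔
          ⨆ i ∈ Finset.Icc 1 n, MeasurableSpace.comap (τ i)
            (inferInstance : MeasurableSpace ℝ)) →
      -- the unique solution of the fully discrete scheme
      ∀ U : ℕ → Ω → V,
        (∀ ω, U 0 ω = U0) →
        (∀ n, 1 ≤ n → n ≤ N → Measurable[𝓕 n] (U n) ∧ MemLp (U n) 2 P) →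
        (∀ n, 1 ≤ n → n ≤ N → ∀ᵐ ω ∂P, U n ω ∈ Vh ∧
          ∀ w ∈ Vh, ⟪j (U n ω), j w⟫ + k * 𝒜 (ξ n ω) (U n ω) w
            = k * ⟪f (ξ n ω), j w⟫ + ⟪j (U (n - 1) ω), j w⟫) →
      (⨆ n ∈ Finset.Icc 0 N, ∫ ω, ‖j (U n ω)‖ ^ 2 ∂P) +
        (∑ m ∈ Finset.Icc 1 N, ∫ ω, ‖j (U m ω) - j (U (m - 1) ω)‖ ^ 2 ∂P) +
        k * μ * ∑ m ∈ Finset.Icc 1 N, ∫ ω, ‖U m ω‖ ^ 2 ∂P ≤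
      C * (T + ‖j U0‖ ^ 2 + ∫ t in Set.Icc (0:ℝ) T, ‖f t‖ ^ 2) :=
  stmt12_general V H j M μ hμ
end
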